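/- arXiv:2403.10451 — 9 statements merged into one kernel-verified Lean document; each statement's English description precedes it below -/
import Mathlib

section
/- Consider a finite two-player zero-sum game and n ≥ 1 rounds of play in which the maximizer plays mixed strategies φ_1,…,φ_n and the minimizer best-responds with pure strategies a_1,…,a_n ∈ 𝒜, i.e. a_t minimizes E_{φ_t}[u(a,·)] over a ∈ 𝒜 for every t. If the maximizer's average regret satisfies max_{f ∈ ℱ} (1/n)·Σ_{t=1}^n u(a_t, f) − (1/n)·Σ_{t=1}^n E_{φ_t}[u(a_t,·)] ≤ ε for some ε ≥ 0, then the average mixed strategy φ̄ = (1/n)·Σ_t φ_t is an ε-approximate maxmin strategy, the mixed strategy ᾱ that plays each a_t with probability 1/n is an ε-approximate minmax strategy, and (ᾱ, φ̄) is an ε-approximate Nash equilibrium. -/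
/-!
Let `V` be the maximizer's average realized payoff. Against the empirical mixture `αbar` of the
best responses, every pure `f` earns its time average, so the regret bound says that
`max_f E_αbar[u(·, f)] ≤ V + ε`; since each `a t` is a best response to `φ t`, averaging gives
`V ≤ min_a E_φbar[u(a, ·)]`. Hence the duality gap of `(αbar, φbar)` is at most `ε`, and by weak
duality a pair of mixed strategies with duality gap at most `ε` is ε-optimal in all three senses.
-/

open Finset

section WeightedAverage

variable {ι : Type*} [Fintype ι] [Nonempty ι] {w : ι → ℝ}

theorem sum_mul_le_sup'_of_mem_stdSimplex (hw : w ∈ stdSimplex ℝ ι) (g : ι → ℝ) :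
    ∑ i, w i * g i ≤ univ.sup' univ_nonempty g := by
  have h := centerMass_le_sup (s := univ) (f := g) (fun i _ => hw.1 i) (hw.2 ▸ one_pos)
  rwa [centerMass_eq_of_sum_1 _ _ hw.2] at h

theorem inf'_le_sum_mul_of_mem_stdSimplex (hw : w ∈ stdSimplex ℝ ι) (g : ι → ℝ) :
    univ.inf' univ_nonempty g ≤ ∑ i, w i * g i := by
  have h := inf_le_centerMass (s := univ) (f := g) (fun i _ => hw.1 i) (hw.2 ▸ one_pos)
  rwa [centerMass_eq_of_sum_1 _ _ hw.2] at h

end WeightedAverage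

section UniformAverage

variable {T ι : Type*} [Fintype T] [Fintype ι]

theorem uniform_average_mem_stdSimplex [Nonempty T] {p : T → ι → ℝ}
    (hp : ∀ t, p t ∈ stdSimplex ℝ ι) :
    (fun i => (1 / (Fintype.card T : ℝ)) * ∑ t, p t i) ∈ stdSimplex ℝ ι := by
  have hT : (0 : ℝ) < Fintype.card T := by exact_mod_cast Fintype.card_pos
  have h := (convex_stdSimplex ℝ ι).sum_mem (t := univ) (w := fun _ => 1 / (Fintype.card T : ℝ))
    (fun _ _ => by positivity) (by simp [hT.ne']) (fun t _ => hp t)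
  convert h using 1
  ext i
  simp [Finset.mul_sum]

theorem sum_const_mul_sum_mul (c : ℝ) (p : T → ι → ℝ) (g : ι → ℝ) :
    ∑ i, (c * ∑ t, p t i) * g i = c * ∑ t, ∑ i, p t i * g i := by
  simp_rw [Finset.mul_sum, Finset.sum_mul]
  rw [Finset.sum_comm]
  simp_rw [mul_assoc]

end UniformAverage

namespace ZeroSumGame

variable {A F : Type*} [Fintype A] [Fintype F] (u : A → F → ℝ)

def payoff (α : A → ℝ) (φ : F → ℝ) : ℝ :=
  ∑ a, ∑ f, α a * φ f * u a f

def maxPayoffAgainst [Nonempty F] (α : A → ℝ) : ℝ :=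
  univ.sup' univ_nonempty fun f => ∑ a, α a * u a f

def minPayoffAgainst [Nonempty A] (φ : F → ℝ) : ℝ :=
  univ.inf' univ_nonempty fun a => ∑ f, φ f * u a f

def IsApproxMinmax [Nonempty F] (α : A → ℝ) (ε : ℝ) : Prop :=
  ∀ α' ∈ stdSimplex ℝ A, maxPayoffAgainst u α ≤ maxPayoffAgainst u α' + ε

def IsApproxMaxmin [Nonempty A] (φ : F → ℝ) (ε : ℝ) : Prop :=
  ∀ φ' ∈ stdSimplex ℝ F, minPayoffAgainst u φ' - ε ≤ minPayoffAgainst u φ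

def IsApproxNash [Nonempty A] [Nonempty F] (α : A → ℝ) (φ : F → ℝ) (ε : ℝ) : Prop :=
  maxPayoffAgainst u α - ε ≤ payoff u α φ ∧ payoff u α φ ≤ minPayoffAgainst u φ + ε

variable {u}

theorem minPayoffAgainst_le_payoff [Nonempty A] {α : A → ℝ} (hα : α ∈ stdSimplex ℝ A)
    (φ : F → ℝ) :
    minPayoffAgainst u φ ≤ payoff u α φ :=
  calc minPayoffAgainst u φ ≤ ∑ a, α a * ∑ f, φ f * u a f :=
        inf'_le_sum_mul_of_mem_stdSimplex hα _
    _ = payoff u α φ := by simp only [payoff, Finset.mul_sum, mul_assoc]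

theorem payoff_le_maxPayoffAgainst [Nonempty F] (α : A → ℝ) {φ : F → ℝ}
    (hφ : φ ∈ stdSimplex ℝ F) :
    payoff u α φ ≤ maxPayoffAgainst u α :=
  calc payoff u α φ = ∑ f, φ f * ∑ a, α a * u a f := by
        rw [payoff, Finset.sum_comm]
        simp only [Finset.mul_sum, mul_left_comm, mul_comm]
    _ ≤ maxPayoffAgainst u α := sum_mul_le_sup'_of_mem_stdSimplex hφ _

theorem minPayoffAgainst_le_maxPayoffAgainst [Nonempty A] [Nonempty F] {α : A → ℝ} {φ : F → ℝ}
    (hα : α ∈ stdSimplex ℝ A) (hφ : φ ∈ stdSimplex ℝ F) :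
    minPayoffAgainst u φ ≤ maxPayoffAgainst u α :=
  (minPayoffAgainst_le_payoff hα φ).trans (payoff_le_maxPayoffAgainst α hφ)

section DualityGap

variable [Nonempty A] [Nonempty F] {α : A → ℝ} {φ : F → ℝ} {ε : ℝ}

theorem isApproxMaxmin_of_maxPayoffAgainst_le
    (hgap : maxPayoffAgainst u α ≤ minPayoffAgainst u φ + ε) (hα : α ∈ stdSimplex ℝ A) :
    IsApproxMaxmin u φ ε := fun φ' hφ' => by
  linarith [minPayoffAgainst_le_maxPayoffAgainst (u := u) hα hφ']

theorem isApproxMinmax_of_maxPayoffAgainst_le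
    (hgap : maxPayoffAgainst u α ≤ minPayoffAgainst u φ + ε) (hφ : φ ∈ stdSimplex ℝ F) :
    IsApproxMinmax u α ε := fun α' hα' => by
  linarith [minPayoffAgainst_le_maxPayoffAgainst (u := u) hα' hφ]

theorem isApproxNash_of_maxPayoffAgainst_le
    (hgap : maxPayoffAgainst u α ≤ minPayoffAgainst u φ + ε)
    (hα : α ∈ stdSimplex ℝ A) (hφ : φ ∈ stdSimplex ℝ F) : IsApproxNash u α φ ε :=
  ⟨by linarith [minPayoffAgainst_le_payoff (u := u) hα φ],
    by linarith [payoff_le_maxPayoffAgainst (u := u) α hφ]⟩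

end DualityGap

end ZeroSumGame

open ZeroSumGame

theorem noregret_average_play_approx_nash_general
    {A F : Type*} [Fintype A] [Fintype F] [Nonempty A] [Nonempty F] [DecidableEq A]
    (u : A → F → ℝ) (n : ℕ) (hn : 1 ≤ n) (ε : ℝ)
    (φ : Fin n → F → ℝ) (hφ0 : ∀ t f, 0 ≤ φ t f) (hφ1 : ∀ t, ∑ f, φ t f = 1)
    (a : Fin n → A)
    -- the minimizer best responds at every round:
    (hbr : ∀ t, ∀ a' : A, ∑ f, φ t f * u (a t) f ≤ ∑ f, φ t f * u a' f)
    -- the maximizer's average regret is at most ε: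
    (hreg : univ.sup' univ_nonempty (fun f => (1 / (n : ℝ)) * ∑ t, u (a t) f)
        - (1 / (n : ℝ)) * ∑ t, ∑ f, φ t f * u (a t) f ≤ ε)
    -- the average mixed strategies:
    (φbar : F → ℝ) (hφbar : ∀ f, φbar f = (1 / (n : ℝ)) * ∑ t, φ t f)
    (αbar : A → ℝ)
    (hαbar : ∀ a' : A, αbar a' = (1 / (n : ℝ)) * ∑ t, (if a t = a' then (1 : ℝ) else 0)) :
    -- φbar is an ε-approximate maxmin strategy:
    (∀ φ' : F → ℝ, (∀ f, 0 ≤ φ' f) → ∑ f, φ' f = 1 →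
        univ.inf' univ_nonempty (fun a' => ∑ f, φ' f * u a' f) - ε
          ≤ univ.inf' univ_nonempty (fun a' => ∑ f, φbar f * u a' f)) ∧
    -- αbar is an ε-approximate minmax strategy:
    (∀ α' : A → ℝ, (∀ a', 0 ≤ α' a') → ∑ a', α' a' = 1 →
        univ.sup' univ_nonempty (fun f => ∑ a', αbar a' * u a' f)
          ≤ univ.sup' univ_nonempty (fun f => ∑ a', α' a' * u a' f) + ε) ∧
    -- (αbar, φbar) is an ε-approximate Nash equilibrium:
    (univ.sup' univ_nonempty (fun f => ∑ a', αbar a' * u a' f) - ε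
        ≤ ∑ a', ∑ f, αbar a' * φbar f * u a' f) ∧
    (∑ a', ∑ f, αbar a' * φbar f * u a' f
        ≤ univ.inf' univ_nonempty (fun a' => ∑ f, φbar f * u a' f) + ε) := by
  have : Nonempty (Fin n) := ⟨⟨0, hn⟩⟩
  have hφbar_mem : φbar ∈ stdSimplex ℝ F := by
    convert uniform_average_mem_stdSimplex (p := φ) fun t => ⟨hφ0 t, hφ1 t⟩
    rw [hφbar, Fintype.card_fin]
  have hαbar_mem : αbar ∈ stdSimplex ℝ A := by
    convert uniform_average_mem_stdSimplex fun t => ite_eq_mem_stdSimplex ℝ (a t)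
    rw [hαbar, Fintype.card_fin]
  have hmax : maxPayoffAgainst u αbar ≤ (1 / (n : ℝ)) * ∑ t, ∑ f, φ t f * u (a t) f + ε := by
    simp only [maxPayoffAgainst, hαbar, sum_const_mul_sum_mul, ite_mul, one_mul, zero_mul,
      sum_ite_eq, mem_univ, if_true]
    linarith
  have hmin : (1 / (n : ℝ)) * ∑ t, ∑ f, φ t f * u (a t) f ≤ minPayoffAgainst u φbar :=
    le_inf' _ _ fun a' _ => by
      simp only [hφbar, sum_const_mul_sum_mul]
      exact mul_le_mul_of_nonneg_left (sum_le_sum fun t _ => hbr t a') (by positivity)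
  have hgap : maxPayoffAgainst u αbar ≤ minPayoffAgainst u φbar + ε := by linarith
  exact ⟨fun φ' h0 h1 => isApproxMaxmin_of_maxPayoffAgainst_le hgap hαbar_mem φ' ⟨h0, h1⟩,
    fun α' h0 h1 => isApproxMinmax_of_maxPayoffAgainst_le hgap hφbar_mem α' ⟨h0, h1⟩,
    isApproxNash_of_maxPayoffAgainst_le hgap hαbar_mem hφbar_mem⟩

/-- If in `n ≥ 1` rounds the maximizer plays mixed strategies `φ 1, …, φ n`,
the minimizer best-responds with pure strategies `a 1, …, a n`, and the maximizer's average
regret is at most `ε`, then the average strategy `φbar` is an ε-approximate maxmin strategy,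
the uniform mixture `αbar` of the best responses is an ε-approximate minmax strategy, and
`(αbar, φbar)` is an ε-approximate Nash equilibrium. -/
theorem noregret_average_play_approx_nash
    {A F : Type*} [Fintype A] [Fintype F] [Nonempty A] [Nonempty F] [DecidableEq A]
    (u : A → F → ℝ) (n : ℕ) (hn : 1 ≤ n) (ε : ℝ) (hε : 0 ≤ ε)
    (φ : Fin n → F → ℝ) (hφ0 : ∀ t f, 0 ≤ φ t f) (hφ1 : ∀ t, ∑ f, φ t f = 1)
    (a : Fin n → A)
    -- the minimizer best responds at every round:
    (hbr : ∀ t, ∀ a' : A, ∑ f, φ t f * u (a t) f ≤ ∑ f, φ t f * u a' f)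
    -- the maximizer's average regret is at most ε:
    (hreg : univ.sup' univ_nonempty (fun f => (1 / (n : ℝ)) * ∑ t, u (a t) f)
        - (1 / (n : ℝ)) * ∑ t, ∑ f, φ t f * u (a t) f ≤ ε)
    -- the average mixed strategies:
    (φbar : F → ℝ) (hφbar : ∀ f, φbar f = (1 / (n : ℝ)) * ∑ t, φ t f)
    (αbar : A → ℝ)
    (hαbar : ∀ a' : A, αbar a' = (1 / (n : ℝ)) * ∑ t, (if a t = a' then (1 : ℝ) else 0)) :
    -- φbar is an ε-approximate maxmin strategy:
    (∀ φ' : F → ℝ, (∀ f, 0 ≤ φ' f) → ∑ f, φ' f = 1 →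
        univ.inf' univ_nonempty (fun a' => ∑ f, φ' f * u a' f) - ε
          ≤ univ.inf' univ_nonempty (fun a' => ∑ f, φbar f * u a' f)) ∧
    -- αbar is an ε-approximate minmax strategy:
    (∀ α' : A → ℝ, (∀ a', 0 ≤ α' a') → ∑ a', α' a' = 1 →
        univ.sup' univ_nonempty (fun f => ∑ a', αbar a' * u a' f)
          ≤ univ.sup' univ_nonempty (fun f => ∑ a', α' a' * u a' f) + ε) ∧
    -- (αbar, φbar) is an ε-approximate Nash equilibrium:
    (univ.sup' univ_nonempty (fun f => ∑ a', αbar a' * u a' f) - ε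
        ≤ ∑ a', ∑ f, αbar a' * φbar f * u a' f) ∧
    (∑ a', ∑ f, αbar a' * φbar f * u a' f
        ≤ univ.inf' univ_nonempty (fun a' => ∑ f, φbar f * u a' f) + ε) :=
  noregret_average_play_approx_nash_general u n hn ε φ hφ0 hφ1 a hbr hreg φbar hφbar αbar hαbar
end

section
/- Fix T ∈ ℕ and B ∈ ℝ with 1 < B < T and ⌈B⌉ + ⌊B⌋ ≥ T + 1. Then the weights β_l (l ∈ {0,…,T}) defined in the context are nonnegative and sum to 1, and the resulting mixed strategy of the algorithm player in SRP-R guarantees the value V: for every k ∈ {1,…,T}, Σ_{l=0}^{T} β_l · u(l,k) ≤ V, with equality for every k ∈ {1,…,T−⌊B⌋} ∪ {T}. In particular, max_{k ∈ {1,…,T}} Σ_l β_l·u(l,k) = V, so the competitive ratio of the finite-horizon ski-rental problem in this regime is V. -/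
open Finset

/-!
Write `m = ⌊B⌋`, `s = T - m` and `r = B / (B - 1)`, so that the weights are geometric,
`β l = r ^ l * β₀` for `l < s`, plus an atom `β T`. Since `r - 1 = 1 / (B - 1)`, the sums
`∑ l < j, r ^ l` and `∑ l < j, (l + B) r ^ l` have closed forms, and with `a = β₀ (B - 1) r ^ s`
the adversary's expected payoff is `a + β T` for every `k ≤ s` (these `k` are at most `B` in this
regime) and `(a s + β T k) / min k B` for `s ≤ k ≤ T`. The atom `β T` is chosen so that
`a s + β T T = B (a + β T)`, i.e. so that stopping at `k = T` pays the same as stopping at `k ≤ s`.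
For `s ≤ k ≤ B` the payoff `a s / k + β T` is then at most `a + β T`, and for `k ≥ B` it grows
with `k` up to its value at `T`. The normalisation `∑ β = 1` fixes `β₀`, and `a + β T = V`.
-/

noncomputable def srprPayoff (B : ℝ) (l k : ℕ) : ℝ :=
  if l < k then ((l : ℝ) + B) / min (k : ℝ) B else (k : ℝ) / min (k : ℝ) B

theorem sum_range_succ_eq_add_of_eq_zero {M : Type*} [AddCommMonoid M] {f : ℕ → M} {s T : ℕ}
    (hsT : s ≤ T) (hf : ∀ l, s ≤ l → l < T → f l = 0) :
    ∑ l ∈ range (T + 1), f l = ∑ l ∈ range s, f l + f T := by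
  rw [sum_range_succ, ← sum_range_add_sum_Ico _ hsT,
    sum_eq_zero fun l hl => hf l (mem_Ico.1 hl).1 (mem_Ico.1 hl).2, add_zero]

theorem div_min_le_add {a b s k T B : ℝ} (ha : 0 ≤ a) (hb : 0 ≤ b) (hs : 0 < s) (hsk : s ≤ k)
    (hkT : k ≤ T) (hB : 0 < B) (hbal : a * s + b * T = B * (a + b)) :
    (a * s + b * k) / min k B ≤ a + b := by
  rcases le_total k B with hkB | hBk
  · rw [min_eq_left hkB, div_le_iff₀ (hs.trans_le hsk)]
    nlinarith [mul_le_mul_of_nonneg_left hsk ha]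
  · rw [min_eq_right hBk, div_le_iff₀ hB]
    nlinarith [mul_le_mul_of_nonneg_left hkT hb]

theorem lt_add_floor_of_add_one_le_ceil_add_floor {B : ℝ} {T : ℕ} (hB : 0 ≤ B)
    (h : T + 1 ≤ ⌈B⌉₊ + ⌊B⌋₊) : (T : ℝ) < B + ⌊B⌋₊ := by
  have hT : (T : ℝ) + 1 ≤ ⌈B⌉₊ + ⌊B⌋₊ := by exact_mod_cast h
  linarith [Nat.ceil_lt_add_one hB]

section Geometric

variable {B : ℝ}

theorem sub_one_mul_div_sub_one (hB : B ≠ 1) : (B - 1) * (B / (B - 1)) = B :=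
  mul_div_cancel₀ B (sub_ne_zero.2 hB)

theorem sub_one_mul_pow_div_sub_one (hB : B ≠ 1) {n : ℕ} (hn : n ≠ 0) :
    (B - 1) * (B / (B - 1)) ^ n = B * (B / (B - 1)) ^ (n - 1) := by
  obtain ⟨n, rfl⟩ := Nat.exists_eq_succ_of_ne_zero hn
  rw [pow_succ', ← mul_assoc, sub_one_mul_div_sub_one hB, Nat.succ_sub_one]

theorem geom_sum_div_sub_one (hB : B ≠ 1) (n : ℕ) :
    ∑ l ∈ range n, (B / (B - 1)) ^ l = (B - 1) * ((B / (B - 1)) ^ n - 1) := by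
  have hr : B / (B - 1) - 1 = (B - 1)⁻¹ := by
    field_simp [sub_ne_zero.2 hB]
    ring
  have hr1 : B / (B - 1) ≠ 1 := by
    rw [Ne, div_eq_one_iff_eq (sub_ne_zero.2 hB)]
    linarith
  rw [geom_sum_eq hr1, hr, div_inv_eq_mul, mul_comm]

-- Telescopes: `(l + B) r ^ l = (B - 1) ((l + 1) r ^ (l + 1) - l r ^ l)` for `r = B / (B - 1)`.
theorem sum_add_mul_pow_div_sub_one (hB : B ≠ 1) (n : ℕ) :
    ∑ l ∈ range n, ((l : ℝ) + B) * (B / (B - 1)) ^ l = (B - 1) * n * (B / (B - 1)) ^ n := by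
  induction n with
  | zero => simp
  | succ n ih =>
    rw [sum_range_succ, ih, pow_succ]
    push_cast
    linear_combination (-((n : ℝ) + 1) * (B / (B - 1)) ^ n) * sub_one_mul_div_sub_one hB

end Geometric

section Payoff

variable {B : ℝ} {l k s : ℕ}

theorem srprPayoff_of_lt (h : l < k) : srprPayoff B l k = (l + B) / min (k : ℝ) B := if_pos h

theorem srprPayoff_of_le (h : k ≤ l) : srprPayoff B l k = k / min (k : ℝ) B := if_neg h.not_gt

theorem srprPayoff_eq_one (hkl : k ≤ l) (hk : 0 < k) (hkB : (k : ℝ) ≤ B) :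
    srprPayoff B l k = 1 := by
  rw [srprPayoff_of_le hkl, min_eq_left hkB, div_self (by positivity)]

theorem sum_pow_mul_srprPayoff_of_le (hB : B ≠ 1) (hk : 0 < k) (hks : k ≤ s) (hkB : (k : ℝ) ≤ B) :
    ∑ l ∈ range s, (B / (B - 1)) ^ l * srprPayoff B l k = (B - 1) * (B / (B - 1)) ^ s := by
  have below : ∑ l ∈ range k, (B / (B - 1)) ^ l * srprPayoff B l k
      = (B - 1) * (B / (B - 1)) ^ k := by
    have hk0 : (k : ℝ) ≠ 0 := by positivity
    rw [← mul_div_cancel_right₀ ((B - 1) * (B / (B - 1)) ^ k) hk0, mul_right_comm,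
      ← sum_add_mul_pow_div_sub_one hB, sum_div]
    refine sum_congr rfl fun l hl => ?_
    rw [srprPayoff_of_lt (mem_range.1 hl), min_eq_left hkB]
    ring
  have above : ∑ l ∈ Ico k s, (B / (B - 1)) ^ l * srprPayoff B l k
      = (B - 1) * ((B / (B - 1)) ^ s - (B / (B - 1)) ^ k) := by
    rw [sum_congr rfl fun l hl => by rw [srprPayoff_eq_one (mem_Ico.1 hl).1 hk hkB, mul_one],
      sum_Ico_eq_sub _ hks, geom_sum_div_sub_one hB, geom_sum_div_sub_one hB]
    ring
  rw [← sum_range_add_sum_Ico _ hks, below, above]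
  ring

theorem sum_pow_mul_srprPayoff_of_ge (hB : B ≠ 1) (hsk : s ≤ k) :
    ∑ l ∈ range s, (B / (B - 1)) ^ l * srprPayoff B l k
      = (B - 1) * (B / (B - 1)) ^ s * s / min (k : ℝ) B := by
  rw [mul_right_comm, ← sum_add_mul_pow_div_sub_one hB, sum_div]
  refine sum_congr rfl fun l hl => ?_
  rw [srprPayoff_of_lt ((mem_range.1 hl).trans_le hsk)]
  ring

end Payoff

section Constants

variable {B T m x β₀ βT : ℝ}

theorem sub_one_lt_mul_div_mul (hB : 1 < B) (hBT : B < T) (hTm : T ≤ B + m) (hx : 1 ≤ x) :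
    B - 1 < B * m / (T - B) * x := by
  have hm : 1 ≤ m / (T - B) := by
    rw [one_le_div (by linarith)]
    linarith
  calc B - 1 < B * 1 * 1 := by linarith
    _ ≤ B * (m / (T - B)) * x := by gcongr
    _ = B * m / (T - B) * x := by ring

theorem mul_add_eq_inv_one_sub (hB : 1 < B) (hBT : B < T) (hTm : T ≤ B + m) (hx : 1 ≤ x)
    (hβ₀ : β₀ = (B * m / (T - B) * x - (B - 1))⁻¹)
    (hβT : βT = B / (T - B) * x * (B + m - T) * β₀) :
    B * x * β₀ + βT = (1 - (T - B) * (B - 1) / (B * m * x))⁻¹ := by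
  have hTB : 0 < T - B := sub_pos.2 hBT
  have hm : 0 < m := by linarith
  have hD := sub_one_lt_mul_div_mul hB hBT hTm hx
  rw [div_mul_eq_mul_div, lt_div_iff₀ hTB] at hD
  rw [hβT, hβ₀]
  field_simp
  congr 1
  ring

theorem mul_sub_add_eq_one (hB : 1 < B) (hBT : B < T) (hTm : T ≤ B + m) (hx : 1 ≤ x)
    (hβ₀ : β₀ = (B * m / (T - B) * x - (B - 1))⁻¹)
    (hβT : βT = B / (T - B) * x * (B + m - T) * β₀) :
    B * x * β₀ - (B - 1) * β₀ + βT = 1 := by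
  have hTB : 0 < T - B := sub_pos.2 hBT
  have hD := sub_one_lt_mul_div_mul hB hBT hTm hx
  rw [div_mul_eq_mul_div, lt_div_iff₀ hTB] at hD
  rw [hβT, hβ₀]
  field_simp
  rw [div_eq_one_iff_eq (by linarith)]
  ring

theorem nonneg_of_eq_mul_sub (hB : 0 ≤ B) (hBT : B < T) (hTm : T ≤ B + m) (hx : 0 ≤ x)
    (hβ₀ : 0 ≤ β₀) (hβT : βT = B / (T - B) * x * (B + m - T) * β₀) : 0 ≤ βT := by
  have hTB : 0 ≤ T - B := by linarith
  have hBmT : 0 ≤ B + m - T := by linarith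
  rw [hβT]
  positivity

theorem mul_mul_sub_add_mul_eq (hBT : B ≠ T) (hβT : βT = B / (T - B) * x * (B + m - T) * β₀) :
    B * x * β₀ * (T - m) + βT * T = B * (B * x * β₀ + βT) := by
  rw [hβT]
  field_simp [sub_ne_zero.2 hBT.symm]
  ring

end Constants

section Profile

variable {B β₀ : ℝ} {β : ℕ → ℝ} {s T k : ℕ}

theorem sum_mul_eq_of_geometric (hsT : s ≤ T) (hβlow : ∀ l < s, β l = (B / (B - 1)) ^ l * β₀)
    (hβmid : ∀ l, s ≤ l → l < T → β l = 0) (f : ℕ → ℝ) :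
    ∑ l ∈ range (T + 1), β l * f l = β₀ * ∑ l ∈ range s, (B / (B - 1)) ^ l * f l + β T * f T := by
  rw [sum_range_succ_eq_add_of_eq_zero hsT fun l h1 h2 => by rw [hβmid l h1 h2, zero_mul], mul_sum]
  congr 1
  refine sum_congr rfl fun l hl => ?_
  rw [hβlow l (mem_range.1 hl)]
  ring

theorem nonneg_of_geometric (hB : 1 < B) (hβlow : ∀ l < s, β l = (B / (B - 1)) ^ l * β₀)
    (hβmid : ∀ l, s ≤ l → l < T → β l = 0) (hβ₀ : 0 ≤ β₀) (hβT : 0 ≤ β T) :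
    ∀ l ≤ T, 0 ≤ β l := by
  intro l hl
  rcases lt_or_ge l s with hls | hsl
  · have : 0 < B - 1 := by linarith
    rw [hβlow l hls]
    positivity
  · rcases hl.lt_or_eq with hlT | rfl
    · rw [hβmid l hsl hlT]
    · exact hβT

theorem sum_eq_of_geometric (hB : B ≠ 1) (hsT : s ≤ T)
    (hβlow : ∀ l < s, β l = (B / (B - 1)) ^ l * β₀) (hβmid : ∀ l, s ≤ l → l < T → β l = 0) :
    ∑ l ∈ range (T + 1), β l = β₀ * ((B - 1) * ((B / (B - 1)) ^ s - 1)) + β T := by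
  simpa [geom_sum_div_sub_one hB] using sum_mul_eq_of_geometric hsT hβlow hβmid fun _ => 1

theorem sum_mul_srprPayoff_of_le (hB : B ≠ 1) (hsT : s ≤ T)
    (hβlow : ∀ l < s, β l = (B / (B - 1)) ^ l * β₀) (hβmid : ∀ l, s ≤ l → l < T → β l = 0)
    (hk : 0 < k) (hks : k ≤ s) (hkB : (k : ℝ) ≤ B) :
    ∑ l ∈ range (T + 1), β l * srprPayoff B l k = β₀ * ((B - 1) * (B / (B - 1)) ^ s) + β T := by
  rw [sum_mul_eq_of_geometric hsT hβlow hβmid, sum_pow_mul_srprPayoff_of_le hB hk hks hkB,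
    srprPayoff_eq_one (hks.trans hsT) hk hkB, mul_one]

theorem sum_mul_srprPayoff_of_ge (hB : B ≠ 1) (hsT : s ≤ T)
    (hβlow : ∀ l < s, β l = (B / (B - 1)) ^ l * β₀) (hβmid : ∀ l, s ≤ l → l < T → β l = 0)
    (hsk : s ≤ k) (hkT : k ≤ T) :
    ∑ l ∈ range (T + 1), β l * srprPayoff B l k
      = (β₀ * ((B - 1) * (B / (B - 1)) ^ s) * s + β T * k) / min (k : ℝ) B := by
  rw [sum_mul_eq_of_geometric hsT hβlow hβmid, sum_pow_mul_srprPayoff_of_ge hB hsk,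
    srprPayoff_of_le hkT]
  ring

theorem sum_mul_srprPayoff_eq_of_balance (hB : 1 < B) (hsB : (s : ℝ) ≤ B) (hBT : B ≤ T)
    (hsT : s ≤ T) (hβlow : ∀ l < s, β l = (B / (B - 1)) ^ l * β₀)
    (hβmid : ∀ l, s ≤ l → l < T → β l = 0)
    (hbal : β₀ * ((B - 1) * (B / (B - 1)) ^ s) * s + β T * T
      = B * (β₀ * ((B - 1) * (B / (B - 1)) ^ s) + β T))
    (hk : 0 < k) (hkT : k ≤ s ∨ k = T) :
    ∑ l ∈ range (T + 1), β l * srprPayoff B l k = β₀ * ((B - 1) * (B / (B - 1)) ^ s) + β T := by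
  rcases hkT with hks | rfl
  · exact sum_mul_srprPayoff_of_le hB.ne' hsT hβlow hβmid hk hks
      ((Nat.cast_le.2 hks).trans hsB)
  · rw [sum_mul_srprPayoff_of_ge hB.ne' hsT hβlow hβmid hsT le_rfl, min_eq_right hBT, hbal,
      mul_div_cancel_left₀ _ (by linarith)]

theorem sum_mul_srprPayoff_le_of_balance (hB : 1 < B) (hsB : (s : ℝ) ≤ B) (hBT : B ≤ T)
    (hs : 0 < s) (hsT : s ≤ T) (hβlow : ∀ l < s, β l = (B / (B - 1)) ^ l * β₀)
    (hβmid : ∀ l, s ≤ l → l < T → β l = 0) (hβ₀ : 0 ≤ β₀) (hβT : 0 ≤ β T)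
    (hbal : β₀ * ((B - 1) * (B / (B - 1)) ^ s) * s + β T * T
      = B * (β₀ * ((B - 1) * (B / (B - 1)) ^ s) + β T))
    (hk : 0 < k) (hkT : k ≤ T) :
    ∑ l ∈ range (T + 1), β l * srprPayoff B l k ≤ β₀ * ((B - 1) * (B / (B - 1)) ^ s) + β T := by
  rcases le_total k s with hks | hsk
  · exact (sum_mul_srprPayoff_eq_of_balance hB hsB hBT hsT hβlow hβmid hbal hk (.inl hks)).le
  · rw [sum_mul_srprPayoff_of_ge hB.ne' hsT hβlow hβmid hsk hkT]
    have hr : 0 ≤ (B - 1) * (B / (B - 1)) ^ s := by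
      have : 0 < B - 1 := by linarith
      positivity
    exact div_min_le_add (mul_nonneg hβ₀ hr) hβT (by exact_mod_cast hs) (by exact_mod_cast hsk)
      (by exact_mod_cast hkT) (by linarith) hbal

end Profile

/-- For `1 < B < T` and `⌈B⌉ + ⌊B⌋ ≥ T + 1`, the explicit weights `β` form a
mixed strategy of the algorithm player in SRP-R that guarantees the value `V`: the adversary's
expected payoff is at most `V` for every pure strategy `k ∈ {1,…,T}`, with equality for
`k ∈ {1,…,T−⌊B⌋} ∪ {T}`; hence the competitive ratio in this regime is `V`. -/
theorem srpr_worst_case_strategy_large_B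
    (T : ℕ) (B : ℝ) (hB1 : 1 < B) (hBT : B < T)
    (hreg : T + 1 ≤ ⌈B⌉₊ + ⌊B⌋₊)
    (u : ℕ → ℕ → ℝ)
    (hu : ∀ l k, u l k =
      if l < k then ((l : ℝ) + B) / min (k : ℝ) B else (k : ℝ) / min (k : ℝ) B)
    (β : ℕ → ℝ) (β0 V : ℝ)
    (hβ0 : β0 = ((B * (⌊B⌋₊ : ℝ) / ((T : ℝ) - B)) * (B / (B - 1)) ^ (T - ⌊B⌋₊ - 1)
                  - (B - 1))⁻¹)
    (hβlow : ∀ l, l + ⌊B⌋₊ + 1 ≤ T → β l = (B / (B - 1)) ^ l * β0)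
    (hβT : β T = (B / ((T : ℝ) - B)) * (B / (B - 1)) ^ (T - ⌊B⌋₊ - 1)
                  * (B + (⌊B⌋₊ : ℝ) - (T : ℝ)) * β0)
    (hβelse : ∀ l, ¬ l + ⌊B⌋₊ + 1 ≤ T → l ≠ T → β l = 0)
    (hV : V = (1 - ((T : ℝ) - B) * (B - 1)
                / (B * (⌊B⌋₊ : ℝ) * (B / (B - 1)) ^ (T - ⌊B⌋₊ - 1)))⁻¹) :
    (∀ l ≤ T, 0 ≤ β l) ∧
    (∑ l ∈ Finset.range (T + 1), β l = 1) ∧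
    (∀ k ∈ Finset.Icc 1 T, ∑ l ∈ Finset.range (T + 1), β l * u l k ≤ V) ∧
    (∀ k ∈ Finset.Icc 1 T, (k ≤ T - ⌊B⌋₊ ∨ k = T) →
        ∑ l ∈ Finset.range (T + 1), β l * u l k = V) ∧
    ((Finset.Icc 1 T).sup' (Finset.nonempty_Icc.mpr (by exact_mod_cast (hB1.trans hBT).le))
        (fun k => ∑ l ∈ Finset.range (T + 1), β l * u l k) = V) := by
  set m := ⌊B⌋₊
  set s := T - m
  set x := (B / (B - 1)) ^ (s - 1)
  have hB : B ≠ 1 := hB1.ne'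
  have hTm : (T : ℝ) < B + m := lt_add_floor_of_add_one_le_ceil_add_floor (by linarith) hreg
  have hmT : m < T := by exact_mod_cast (Nat.floor_le (by linarith : 0 ≤ B)).trans_lt hBT
  have hsT : s ≤ T := Nat.sub_le T m
  have hsm : (s : ℝ) = T - m := by rw [Nat.cast_sub hmT.le]
  have hx : 1 ≤ x := one_le_pow₀ (by rw [le_div_iff₀ (by linarith)]; linarith)
  have hxs : (B - 1) * (B / (B - 1)) ^ s = B * x := sub_one_mul_pow_div_sub_one hB (by omega)
  obtain rfl : u = srprPayoff B := funext₂ hu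
  have hβs : ∀ l < s, β l = (B / (B - 1)) ^ l * β0 := fun l hl => hβlow l (by omega)
  have hβmid : ∀ l, s ≤ l → l < T → β l = 0 := fun l h1 h2 => hβelse l (by omega) (by omega)
  have hβ0pos : 0 < β0 := hβ0 ▸ inv_pos.2 (sub_pos.2 (sub_one_lt_mul_div_mul hB1 hBT hTm.le hx))
  have hβTnonneg : 0 ≤ β T :=
    nonneg_of_eq_mul_sub (by linarith) hBT hTm.le (by positivity) hβ0pos.le hβT
  have hsB : (s : ℝ) ≤ B := by rw [hsm]; linarith
  have hVa : V = β0 * ((B - 1) * (B / (B - 1)) ^ s) + β T := by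
    rw [hV, hxs, ← mul_add_eq_inv_one_sub hB1 hBT hTm.le hx hβ0 hβT]
    ring
  have hbal : β0 * ((B - 1) * (B / (B - 1)) ^ s) * s + β T * T
      = B * (β0 * ((B - 1) * (B / (B - 1)) ^ s) + β T) := by
    rw [hxs, hsm]
    linear_combination mul_mul_sub_add_mul_eq hBT.ne hβT
  have hle : ∀ k ∈ Icc 1 T, ∑ l ∈ range (T + 1), β l * srprPayoff B l k ≤ V := fun k hk =>
    hVa ▸ sum_mul_srprPayoff_le_of_balance hB1 hsB hBT.le (by omega) hsT hβs hβmid hβ0pos.le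
      hβTnonneg hbal (mem_Icc.1 hk).1 (mem_Icc.1 hk).2
  have heq : ∀ k ∈ Icc 1 T, (k ≤ s ∨ k = T) →
      ∑ l ∈ range (T + 1), β l * srprPayoff B l k = V := fun k hk hkT =>
    hVa ▸ sum_mul_srprPayoff_eq_of_balance hB1 hsB hBT.le hsT hβs hβmid hbal (mem_Icc.1 hk).1 hkT
  have hTmem : T ∈ Icc 1 T := mem_Icc.2 ⟨by omega, le_rfl⟩
  refine ⟨nonneg_of_geometric hB1 hβs hβmid hβ0pos.le hβTnonneg, ?_, hle, heq,
    le_antisymm (sup'_le _ _ hle) (le_sup'_of_le _ hTmem (heq T hTmem (.inr rfl)).ge)⟩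
  rw [sum_eq_of_geometric hB hsT hβs hβmid]
  linear_combination mul_sub_add_eq_one hB1 hBT hTm.le hx hβ0 hβT + β0 * hxs
end

section
/- Fix T ∈ ℕ and B ∈ ℝ with 1 < B < T and ⌈B⌉ + ⌊B⌋ ≥ T + 1, and let β be as defined in the context. Then for every k ∈ {1,…,T−⌊B⌋}, the conditional probability of stopping on the k-th contiguous good-weather day, given continuation through the first k−1, satisfies β_{k−1} / (1 − Σ_{l=0}^{k−2} β_l) = ( (B·⌊B⌋/(T−B))·(B/(B−1))^{T−⌊B⌋−k} − (B−1) )^{−1}. -/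
open Finset

/-!
On the days `l < T - ⌊B⌋` the weights are geometric, `β_l = r^l β_0` with `r = B/(B-1)`, so
`r - 1 = 1/(B-1)` and the survival mass `1 - ∑_{l<k-1} β_l` telescopes to `r^{k-1} β_0 D_k`, where
`D_k = C r^{T-⌊B⌋-k} - (B-1)` and `C = B⌊B⌋/(T-B)`. The hazard ratio is therefore `D_k⁻¹`, once
`β_0 = D_1⁻¹` is known not to vanish: `⌈B⌉ + ⌊B⌋ ≥ T + 1` gives `T - B ≤ ⌊B⌋`, hence `C > B - 1`
and `D_1 > 0`.
-/

theorem sum_range_pow_eq_mul_pow_sub_one {K : Type*} [Field K] {r a : K} (hra : (r - 1) * a = 1)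
    (m : ℕ) : ∑ l ∈ range m, r ^ l = a * (r ^ m - 1) := by
  rw [← geom_sum_mul]
  linear_combination (-∑ l ∈ range m, r ^ l) * hra

theorem geometric_hazard_eq_inv {K : Type*} [Field K] {r a c : K} (hra : (r - 1) * a = 1)
    (hr : r ≠ 0) (j m : ℕ) (hD : c * r ^ (j + m) - a ≠ 0) :
    r ^ m * (c * r ^ (j + m) - a)⁻¹ / (1 - ∑ l ∈ range m, r ^ l * (c * r ^ (j + m) - a)⁻¹)
      = (c * r ^ j - a)⁻¹ := by
  have hsurvival : 1 - ∑ l ∈ range m, r ^ l * (c * r ^ (j + m) - a)⁻¹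
      = r ^ m * (c * r ^ (j + m) - a)⁻¹ * (c * r ^ j - a) := by
    rw [← sum_mul, sum_range_pow_eq_mul_pow_sub_one hra]
    field_simp
    ring
  have hrm : r ^ m * (c * r ^ (j + m) - a)⁻¹ ≠ 0 := mul_ne_zero (pow_ne_zero m hr) (inv_ne_zero hD)
  rw [hsurvival, div_mul_cancel_left₀ hrm]

theorem sub_one_lt_mul_floor_div_sub {T : ℕ} {B : ℝ} (hB1 : 1 < B) (hBT : B < T)
    (hreg : T + 1 ≤ ⌈B⌉₊ + ⌊B⌋₊) : B - 1 < B * ⌊B⌋₊ / (T - B) := by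
  have hT : (T : ℝ) ≤ 2 * ⌊B⌋₊ := by
    exact_mod_cast (show T ≤ 2 * ⌊B⌋₊ by have := Nat.ceil_le_floor_add_one B; omega)
  have hfloor_le : (⌊B⌋₊ : ℝ) ≤ B := Nat.floor_le (by linarith)
  have hfloor_pos : (0 : ℝ) < ⌊B⌋₊ := by exact_mod_cast Nat.floor_pos.mpr hB1.le
  rw [lt_div_iff₀ (by linarith)]
  nlinarith

theorem srpr_conditional_stopping_large_B_general
    (T : ℕ) (B : ℝ) (hB1 : 1 < B) (hBT : B < T)
    (hreg : T + 1 ≤ ⌈B⌉₊ + ⌊B⌋₊)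
    (β : ℕ → ℝ) (β0 : ℝ)
    (hβ0 : β0 = ((B * (⌊B⌋₊ : ℝ) / ((T : ℝ) - B)) * (B / (B - 1)) ^ (T - ⌊B⌋₊ - 1)
                  - (B - 1))⁻¹)
    (hβlow : ∀ l, l + ⌊B⌋₊ + 1 ≤ T → β l = (B / (B - 1)) ^ l * β0) :
    ∀ k, 1 ≤ k → k ≤ T - ⌊B⌋₊ →
      β (k - 1) / (1 - ∑ l ∈ Finset.range (k - 1), β l)
        = ((B * (⌊B⌋₊ : ℝ) / ((T : ℝ) - B)) * (B / (B - 1)) ^ (T - ⌊B⌋₊ - k)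
            - (B - 1))⁻¹ := by
  intro k hk1 hkN
  set r := B / (B - 1)
  set C := B * (⌊B⌋₊ : ℝ) / ((T : ℝ) - B)
  have hra : (r - 1) * (B - 1) = 1 := by
    simp only [r]; field_simp [(by linarith : B - 1 ≠ 0)]; ring
  have hr : r ≠ 0 := div_ne_zero (by linarith) (by linarith)
  have hexp : T - ⌊B⌋₊ - 1 = (T - ⌊B⌋₊ - k) + (k - 1) := by omega
  have hD : C * r ^ (T - ⌊B⌋₊ - 1) - (B - 1) ≠ 0 := by
    have hC : B - 1 < C := sub_one_lt_mul_floor_div_sub hB1 hBT hreg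
    have hr1 : 1 ≤ r ^ (T - ⌊B⌋₊ - 1) := one_le_pow₀ (by rw [le_div_iff₀] <;> linarith)
    nlinarith
  rw [hexp] at hD hβ0
  rw [sum_congr rfl fun l hl => hβlow l (by rw [mem_range] at hl; omega),
    hβlow (k - 1) (by omega), hβ0]
  exact geometric_hazard_eq_inv hra hr _ _ hD

/-- For `1 < B < T` and `⌈B⌉ + ⌊B⌋ ≥ T + 1`, with the optimal worst-case
weights `β` of SRP-R, the conditional probability of stopping on the k-th contiguous
good-weather day (given continuation through the first k−1) is
`((B⌊B⌋/(T−B))·(B/(B−1))^{T−⌊B⌋−k} − (B−1))⁻¹` for every `k ∈ {1,…,T−⌊B⌋}`. -/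
theorem srpr_conditional_stopping_large_B
    (T : ℕ) (B : ℝ) (hB1 : 1 < B) (hBT : B < T)
    (hreg : T + 1 ≤ ⌈B⌉₊ + ⌊B⌋₊)
    (β : ℕ → ℝ) (β0 : ℝ)
    (hβ0 : β0 = ((B * (⌊B⌋₊ : ℝ) / ((T : ℝ) - B)) * (B / (B - 1)) ^ (T - ⌊B⌋₊ - 1)
                  - (B - 1))⁻¹)
    (hβlow : ∀ l, l + ⌊B⌋₊ + 1 ≤ T → β l = (B / (B - 1)) ^ l * β0)
    (hβT : β T = (B / ((T : ℝ) - B)) * (B / (B - 1)) ^ (T - ⌊B⌋₊ - 1)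
                  * (B + (⌊B⌋₊ : ℝ) - (T : ℝ)) * β0)
    (hβelse : ∀ l, ¬ l + ⌊B⌋₊ + 1 ≤ T → l ≠ T → β l = 0) :
    ∀ k, 1 ≤ k → k ≤ T - ⌊B⌋₊ →
      β (k - 1) / (1 - ∑ l ∈ Finset.range (k - 1), β l)
        = ((B * (⌊B⌋₊ : ℝ) / ((T : ℝ) - B)) * (B / (B - 1)) ^ (T - ⌊B⌋₊ - k)
            - (B - 1))⁻¹ :=
  srpr_conditional_stopping_large_B_general T B hB1 hBT hreg β β0 hβ0 hβlow
end

section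
/- Fix T ∈ ℕ and B ∈ ℝ with 1 < B < T and ⌈B⌉ + ⌊B⌋ < T + 1, and let β be as defined in the context. Then for every k ∈ {1,…,⌈B⌉−1}, the conditional probability of stopping on the k-th contiguous good-weather day, given continuation through the first k−1, satisfies β_{k−1} / (1 − Σ_{l=0}^{k−2} β_l) = ( (B−1)·(B/(B−1))^{⌈B⌉−k}·B/(⌈B⌉−1) − (B−1) )^{−1}; moreover β_{⌈B⌉−1} / (1 − Σ_{l=0}^{⌈B⌉−2} β_l) = 1. -/
open Finset

/-!
With `r = B/(B-1)` and `n = ⌈B⌉ - 1`, the weights `β_l = r^l β_0` (`l < n`) sum geometrically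
to `β_0 (B-1)(r^m - 1)` because `r - 1 = 1/(B-1)`; the normalisation of `β_0` turns the
remaining mass after `m` days into `β_0 (B-1)(r^n B/n - r^m)`. Dividing `β_m` by it cancels
`β_0 r^m`, and on the last day `r (B-1) = B` makes numerator and denominator agree.
-/

namespace SkiRental

/-- The paper's conditional probability of stopping on day `j + 1`: weight `β j` belongs to day
`j + 1`. -/
noncomputable def hazard (β : ℕ → ℝ) (j : ℕ) : ℝ :=
  β j / (1 - ∑ l ∈ range j, β l)

variable {B β0 : ℝ} {β : ℕ → ℝ}

theorem sum_range_pow_div_sub_one (hB : B ≠ 1) (m : ℕ) :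
    ∑ l ∈ range m, (B / (B - 1)) ^ l = (B - 1) * ((B / (B - 1)) ^ m - 1) := by
  have hB' : B - 1 ≠ 0 := sub_ne_zero.mpr hB
  have hr : B / (B - 1) - 1 = (B - 1)⁻¹ := by field_simp; ring
  rw [geom_sum_eq (by rw [← sub_ne_zero, hr]; exact inv_ne_zero hB'), hr, div_inv_eq_mul,
    mul_comm]

theorem one_sub_sum_range_of_geometric {D : ℝ} {m : ℕ} (hB : B ≠ 1)
    (hβ : ∀ l < m, β l = (B / (B - 1)) ^ l * β0) (hnorm : β0 * ((B - 1) * (D - 1)) = 1) :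
    1 - ∑ l ∈ range m, β l = β0 * (B - 1) * (D - (B / (B - 1)) ^ m) := by
  rw [sum_congr rfl fun l hl => hβ l (mem_range.mp hl), ← sum_mul, sum_range_pow_div_sub_one hB]
  linear_combination -hnorm

variable {N : ℕ}

theorem one_lt_pow_mul_div_pred (hB : 1 < B) (hN : 2 ≤ N) (hNB : (N : ℝ) - 1 < B) (m : ℕ) :
    1 < (B / (B - 1)) ^ m * B / ((N : ℝ) - 1) := by
  have hN1 : (0 : ℝ) < N - 1 := by
    have : (2 : ℝ) ≤ N := by exact_mod_cast hN
    linarith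
  have hr : 1 ≤ (B / (B - 1)) ^ m := one_le_pow₀ ((one_le_div (by linarith)).mpr (by linarith))
  rw [lt_div_iff₀ hN1]
  nlinarith

theorem hazard_eq_of_lt (hB : 1 < B) (hβ0 : β0 ≠ 0)
    (hβ : ∀ l, l + 2 ≤ N → β l = (B / (B - 1)) ^ l * β0)
    (hnorm : β0 * ((B - 1) * ((B / (B - 1)) ^ (N - 1) * B / ((N : ℝ) - 1) - 1)) = 1)
    {k : ℕ} (hk : 1 ≤ k) (hkN : k + 1 ≤ N) :
    hazard β (k - 1)
      = ((B - 1) * (B / (B - 1)) ^ (N - k) * B / ((N : ℝ) - 1) - (B - 1))⁻¹ := by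
  have hr : B / (B - 1) ≠ 0 := div_ne_zero (by positivity) (by linarith)
  have hpow : (B / (B - 1)) ^ (N - 1) = (B / (B - 1)) ^ (k - 1) * (B / (B - 1)) ^ (N - k) := by
    rw [← pow_add]; congr 1; omega
  rw [hazard, one_sub_sum_range_of_geometric hB.ne' (fun l hl => hβ l (by omega)) hnorm,
    hβ _ (by omega), hpow, ← div_mul_cancel_left₀ (mul_ne_zero (pow_ne_zero (k - 1) hr) hβ0)]
  congr 1
  ring

theorem hazard_pred_eq_one (hB : 1 < B) (hN : 2 ≤ N) (hNB : (N : ℝ) - 1 < B) (hβ0 : β0 ≠ 0)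
    (hβ : ∀ l, l + 2 ≤ N → β l = (B / (B - 1)) ^ l * β0)
    (hβtop : β (N - 1) = (B / (B - 1)) ^ (N - 2) * (B + 1 - (N : ℝ)) * (B / ((N : ℝ) - 1)) * β0)
    (hnorm : β0 * ((B - 1) * ((B / (B - 1)) ^ (N - 1) * B / ((N : ℝ) - 1) - 1)) = 1) :
    hazard β (N - 1) = 1 := by
  have hB1 : B - 1 ≠ 0 := by linarith
  have hN1 : (N : ℝ) - 1 ≠ 0 := by
    have : (2 : ℝ) ≤ N := by exact_mod_cast hN
    linarith
  have hpow : (B / (B - 1)) ^ (N - 1) = (B / (B - 1)) ^ (N - 2) * (B / (B - 1)) := by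
    rw [← pow_succ]; congr 1; omega
  have hden : 1 - ∑ l ∈ range (N - 1), β l = β (N - 1) := by
    rw [one_sub_sum_range_of_geometric hB.ne' (fun l hl => hβ l (by omega)) hnorm, hβtop, hpow]
    field_simp
    ring
  have hB0 : B ≠ 0 := by linarith
  have hlast : B + 1 - (N : ℝ) ≠ 0 := by linarith
  have hne : β (N - 1) ≠ 0 := by
    rw [hβtop]
    exact mul_ne_zero (mul_ne_zero (mul_ne_zero (pow_ne_zero _ (div_ne_zero hB0 hB1)) hlast)
      (div_ne_zero hB0 hN1)) hβ0
  rw [hazard, hden, div_self hne]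

end SkiRental

open SkiRental in
theorem srpr_conditional_stopping_small_B_general
    (B : ℝ) (hB1 : 1 < B)
    (β : ℕ → ℝ) (β0 : ℝ)
    (hβ0 : β0 = ((B - 1) * ((B / (B - 1)) ^ (⌈B⌉₊ - 1) * B / ((⌈B⌉₊ : ℝ) - 1) - 1))⁻¹)
    (hβlow : ∀ l, l + 2 ≤ ⌈B⌉₊ → β l = (B / (B - 1)) ^ l * β0)
    (hβtop : β (⌈B⌉₊ - 1) = (B / (B - 1)) ^ (⌈B⌉₊ - 2) * (B + 1 - (⌈B⌉₊ : ℝ))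
                  * (B / ((⌈B⌉₊ : ℝ) - 1)) * β0) :
    (∀ k, 1 ≤ k → k + 1 ≤ ⌈B⌉₊ →
      β (k - 1) / (1 - ∑ l ∈ Finset.range (k - 1), β l)
        = ((B - 1) * (B / (B - 1)) ^ (⌈B⌉₊ - k) * B / ((⌈B⌉₊ : ℝ) - 1) - (B - 1))⁻¹) ∧
    β (⌈B⌉₊ - 1) / (1 - ∑ l ∈ Finset.range (⌈B⌉₊ - 1), β l) = 1 := by
  have hN : 2 ≤ ⌈B⌉₊ := Nat.lt_ceil.mpr (by exact_mod_cast hB1)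
  have hNB : (⌈B⌉₊ : ℝ) - 1 < B := by linarith [Nat.ceil_lt_add_one (by linarith : 0 ≤ B)]
  have hX : 0 < (B - 1) * ((B / (B - 1)) ^ (⌈B⌉₊ - 1) * B / ((⌈B⌉₊ : ℝ) - 1) - 1) :=
    mul_pos (by linarith) (sub_pos.mpr (one_lt_pow_mul_div_pred hB1 hN hNB _))
  have hnorm := hβ0 ▸ inv_mul_cancel₀ hX.ne'
  have hβ0_ne : β0 ≠ 0 := hβ0 ▸ inv_ne_zero hX.ne'
  exact ⟨fun k hk hkN => hazard_eq_of_lt hB1 hβ0_ne hβlow hnorm hk hkN,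
    hazard_pred_eq_one hB1 hN hNB hβ0_ne hβlow hβtop hnorm⟩

/-- For `1 < B < T` and `⌈B⌉ + ⌊B⌋ < T + 1`, with the optimal worst-case
weights `β` of SRP-R, the conditional probability of stopping on the k-th contiguous
good-weather day (given continuation through the first k−1) is
`((B−1)·(B/(B−1))^{⌈B⌉−k}·B/(⌈B⌉−1) − (B−1))⁻¹` for `k ∈ {1,…,⌈B⌉−1}`, and equals `1` at
`k = ⌈B⌉`. -/
theorem srpr_conditional_stopping_small_B
    (T : ℕ) (B : ℝ) (hB1 : 1 < B) (hBT : B < T)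
    (hreg : ⌈B⌉₊ + ⌊B⌋₊ < T + 1)
    (β : ℕ → ℝ) (β0 : ℝ)
    (hβ0 : β0 = ((B - 1) * ((B / (B - 1)) ^ (⌈B⌉₊ - 1) * B / ((⌈B⌉₊ : ℝ) - 1) - 1))⁻¹)
    (hβlow : ∀ l, l + 2 ≤ ⌈B⌉₊ → β l = (B / (B - 1)) ^ l * β0)
    (hβtop : β (⌈B⌉₊ - 1) = (B / (B - 1)) ^ (⌈B⌉₊ - 2) * (B + 1 - (⌈B⌉₊ : ℝ))
                  * (B / ((⌈B⌉₊ : ℝ) - 1)) * β0)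
    (hβelse : ∀ l, ¬ l + 2 ≤ ⌈B⌉₊ → l ≠ ⌈B⌉₊ - 1 → β l = 0) :
    (∀ k, 1 ≤ k → k + 1 ≤ ⌈B⌉₊ →
      β (k - 1) / (1 - ∑ l ∈ Finset.range (k - 1), β l)
        = ((B - 1) * (B / (B - 1)) ^ (⌈B⌉₊ - k) * B / ((⌈B⌉₊ : ℝ) - 1) - (B - 1))⁻¹) ∧
    β (⌈B⌉₊ - 1) / (1 - ∑ l ∈ Finset.range (⌈B⌉₊ - 1), β l) = 1 :=
  srpr_conditional_stopping_small_B_general B hB1 β β0 hβ0 hβlow hβtop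
end

section
/- For fixed stopping cost B > 1, the competitive ratio of the finite-horizon ski-rental problem is weakly increasing in the horizon: for every T ≥ 1, V(T) ≤ V(T+1), where V(T) denotes the infimum over finitely supported probability distributions β on the (finite) set of adapted stopping rules for horizon T of the maximum over inputs X ∈ {0,1}^T with at least one good day of (Σ_s β(s)·cost(s,X)) / OPT(X). -/
open Finset

/-- An adapted stopping rule for horizon `T`: it takes values in `{1,…,T+1}` and its value is
determined by the coordinates `1,…,min(s(X),T)` of the input. -/
def Adapted (T : ℕ) (s : (Fin T → Bool) → ℕ) : Prop :=
  (∀ X, 1 ≤ s X ∧ s X ≤ T + 1) ∧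
  ∀ X Y : Fin T → Bool, (∀ i : Fin T, (i : ℕ) < min (s X) T → X i = Y i) → s Y = s X

/-- Cost of the stopping rule `s` on input `X`: rent (cost 1) on each good-weather day strictly
before the stopping day, plus the stopping cost `B` if it stops by day `T`. -/
noncomputable def cost (T : ℕ) (B : ℝ) (s : (Fin T → Bool) → ℕ) (X : Fin T → Bool) : ℝ :=
  (∑ i : Fin T, if (i : ℕ) + 1 < s X ∧ X i = true then (1 : ℝ) else 0)
    + (if s X ≤ T then B else 0)

/-- Number of good-weather days in input `X`. -/
def good (T : ℕ) (X : Fin T → Bool) : ℕ := (Finset.univ.filter fun i => X i = true).card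

/-- Expectation over the i.i.d. Bernoulli(p) distribution on inputs. -/
noncomputable def Ep (T : ℕ) (p : ℝ) (f : (Fin T → Bool) → ℝ) : ℝ :=
  ∑ X : Fin T → Bool, p ^ good T X * (1 - p) ^ (T - good T X) * f X

/-- The offline (hindsight) optimum on input `X`. -/
noncomputable def OPTX (T : ℕ) (B : ℝ) (X : Fin T → Bool) : ℝ := min (good T X : ℝ) B

/-- Worst-case ratio of the randomized algorithm `β` against the offline optimum, over inputs
with at least one good-weather day. -/
noncomputable def worstRatio (T : ℕ) (B : ℝ) (β : ((Fin T → Bool) → ℕ) →₀ ℝ) : ℝ :=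
  sSup { w : ℝ | ∃ X : Fin T → Bool, 1 ≤ good T X ∧
      w = (β.sum fun s ws => ws * cost T B s X) / OPTX T B X }

/-- The competitive ratio of the finite-horizon ski-rental problem with horizon `T`: the
infimum, over finitely supported probability distributions on adapted stopping rules, of the
worst-case ratio. -/
noncomputable def V (T : ℕ) (B : ℝ) : ℝ :=
  sInf { v : ℝ | ∃ β : ((Fin T → Bool) → ℕ) →₀ ℝ,
      (∀ s, 0 ≤ β s) ∧ (β.sum fun _ w => w) = 1 ∧
      (∀ s ∈ β.support, Adapted T s) ∧ v = worstRatio T B β }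

/-! An algorithm for horizon `T + 1` yields one for horizon `T`: feed it the input padded with a
bad day `T + 1`, and do not stop on that day. This never raises the cost, and padding does not
change the offline optimum, so every ratio achievable with horizon `T + 1` is dominated by one
achievable with horizon `T`. -/

noncomputable def expectedCost (T : ℕ) (B : ℝ) (β : ((Fin T → Bool) → ℕ) →₀ ℝ)
    (X : Fin T → Bool) : ℝ :=
  β.sum fun s ws => ws * cost T B s X

def restrictHorizon {T : ℕ} (s : (Fin (T + 1) → Bool) → ℕ) : (Fin T → Bool) → ℕ :=
  fun X => min (s (Fin.snoc X false)) (T + 1)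

section

variable {T : ℕ} {B : ℝ}

lemma good_snoc_false (X : Fin T → Bool) : good (T + 1) (Fin.snoc X false) = good T X := by
  simp only [good, Finset.card_filter, Fin.sum_univ_castSucc, Fin.snoc_castSucc, Fin.snoc_last]
  simp

lemma OPTX_snoc_false (X : Fin T → Bool) : OPTX (T + 1) B (Fin.snoc X false) = OPTX T B X := by
  rw [OPTX, OPTX, good_snoc_false]

lemma OPTX_nonneg (hB : 0 ≤ B) (X : Fin T → Bool) : 0 ≤ OPTX T B X :=
  le_min (Nat.cast_nonneg _) hB

lemma cost_nonneg (hB : 0 ≤ B) (s : (Fin T → Bool) → ℕ) (X : Fin T → Bool) :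
    0 ≤ cost T B s X := by
  unfold cost
  positivity

lemma expectedCost_nonneg (hB : 0 ≤ B) {β : ((Fin T → Bool) → ℕ) →₀ ℝ} (hβ : 0 ≤ β)
    (X : Fin T → Bool) : 0 ≤ expectedCost T B β X :=
  Finset.sum_nonneg fun s _ => mul_nonneg (hβ s) (cost_nonneg hB s X)

lemma adapted_neverStop (T : ℕ) : Adapted T fun _ => T + 1 :=
  ⟨fun _ => ⟨Nat.le_add_left 1 T, le_rfl⟩, fun _ _ _ => rfl⟩

lemma Adapted.restrictHorizon {s : (Fin (T + 1) → Bool) → ℕ} (hs : Adapted (T + 1) s) :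
    Adapted T (restrictHorizon s) := by
  obtain ⟨hrange, hdet⟩ := hs
  refine ⟨fun X => ⟨le_min (hrange _).1 (Nat.le_add_left 1 T), min_le_right _ _⟩, fun X Y hXY => ?_⟩
  suffices s (Fin.snoc Y false) = s (Fin.snoc X false) by simp only [_root_.restrictHorizon, this]
  refine hdet _ _ fun i hi => ?_
  induction i using Fin.lastCases with
  | last => simp only [Fin.snoc_last]
  | cast j =>
    simp only [Fin.snoc_castSucc]
    refine hXY j ?_
    simp only [_root_.restrictHorizon, Fin.val_castSucc] at hi ⊢
    omega

lemma restrictHorizon_le_iff (s : (Fin (T + 1) → Bool) → ℕ) (X : Fin T → Bool) :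
    restrictHorizon s X ≤ T ↔ s (Fin.snoc X false) ≤ T := by
  simp [restrictHorizon]

lemma lt_restrictHorizon_iff {k : ℕ} (hk : k < T + 1) (s : (Fin (T + 1) → Bool) → ℕ)
    (X : Fin T → Bool) : k < restrictHorizon s X ↔ k < s (Fin.snoc X false) := by
  simp [restrictHorizon, hk]

lemma cost_restrictHorizon_le (hB : 0 ≤ B) (s : (Fin (T + 1) → Bool) → ℕ) (X : Fin T → Bool) :
    cost T B (restrictHorizon s) X ≤ cost (T + 1) B s (Fin.snoc X false) := by
  simp only [cost, Fin.sum_univ_castSucc, Fin.snoc_castSucc, Fin.snoc_last, Fin.val_castSucc,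
    Bool.false_eq_true, and_false, if_false, add_zero, restrictHorizon_le_iff,
    lt_restrictHorizon_iff, add_lt_add_iff_right, Fin.is_lt]
  refine add_le_add le_rfl ?_
  by_cases h : s (Fin.snoc X false) ≤ T
  · simp [h, h.trans T.le_succ]
  · rw [if_neg h]
    positivity

lemma div_OPTX_le_worstRatio (β : ((Fin T → Bool) → ℕ) →₀ ℝ) {X : Fin T → Bool}
    (hX : 1 ≤ good T X) : expectedCost T B β X / OPTX T B X ≤ worstRatio T B β := by
  have hfin := Set.finite_range fun Y => expectedCost T B β Y / OPTX T B Y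
  refine le_csSup (hfin.subset ?_).bddAbove ⟨X, hX, rfl⟩
  rintro _ ⟨Y, -, rfl⟩
  exact ⟨Y, rfl⟩

lemma worstRatio_le {β : ((Fin T → Bool) → ℕ) →₀ ℝ} {a : ℝ}
    (h : ∀ X, 1 ≤ good T X → expectedCost T B β X / OPTX T B X ≤ a) (ha : 0 ≤ a) :
    worstRatio T B β ≤ a :=
  Real.sSup_le (by rintro _ ⟨X, hX, rfl⟩; exact h X hX) ha

lemma worstRatio_nonneg (hB : 0 ≤ B) {β : ((Fin T → Bool) → ℕ) →₀ ℝ} (hβ : 0 ≤ β) :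
    0 ≤ worstRatio T B β :=
  Real.sSup_nonneg <| by
    rintro _ ⟨X, -, rfl⟩
    exact div_nonneg (expectedCost_nonneg hB hβ X) (OPTX_nonneg hB X)

lemma expectedCost_mapDomain_restrictHorizon_le (hB : 0 ≤ B)
    {β : ((Fin (T + 1) → Bool) → ℕ) →₀ ℝ} (hβ : 0 ≤ β) (X : Fin T → Bool) :
    expectedCost T B (β.mapDomain restrictHorizon) X
      ≤ expectedCost (T + 1) B β (Fin.snoc X false) := by
  rw [expectedCost, Finsupp.sum_mapDomain_index (fun _ => zero_mul _) fun _ _ _ => add_mul _ _ _]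
  exact Finset.sum_le_sum fun s _ =>
    mul_le_mul_of_nonneg_left (cost_restrictHorizon_le hB s X) (hβ s)

lemma worstRatio_mapDomain_restrictHorizon_le (hB : 0 ≤ B)
    {β : ((Fin (T + 1) → Bool) → ℕ) →₀ ℝ} (hβ : 0 ≤ β) :
    worstRatio T B (β.mapDomain restrictHorizon) ≤ worstRatio (T + 1) B β := by
  refine worstRatio_le (fun X hX => ?_) (worstRatio_nonneg hB hβ)
  have hX' : 1 ≤ good (T + 1) (Fin.snoc X false) := by rwa [good_snoc_false]
  calc expectedCost T B (β.mapDomain restrictHorizon) X / OPTX T B X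
      ≤ expectedCost (T + 1) B β (Fin.snoc X false) / OPTX (T + 1) B (Fin.snoc X false) := by
        rw [OPTX_snoc_false]
        exact div_le_div_of_nonneg_right (expectedCost_mapDomain_restrictHorizon_le hB hβ X)
          (OPTX_nonneg hB X)
    _ ≤ worstRatio (T + 1) B β := div_OPTX_le_worstRatio β hX'

lemma V_le_worstRatio (hB : 0 ≤ B) {β : ((Fin T → Bool) → ℕ) →₀ ℝ} (hβ : 0 ≤ β)
    (hβ_sum : (β.sum fun _ w => w) = 1) (hβ_adapted : ∀ s ∈ β.support, Adapted T s) :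
    V T B ≤ worstRatio T B β :=
  csInf_le ⟨0, by rintro _ ⟨γ, hγ, -, -, rfl⟩; exact worstRatio_nonneg hB hγ⟩
    ⟨β, hβ, hβ_sum, hβ_adapted, rfl⟩

end

theorem competitive_ratio_monotone_in_horizon_general
    (B : ℝ) (hB : 1 < B) (T : ℕ) : V T B ≤ V (T + 1) B := by
  have hB₀ : 0 ≤ B := by linarith
  refine le_csInf ⟨_, Finsupp.single (fun _ => T + 2) 1, Finsupp.single_nonneg.2 zero_le_one,
    Finsupp.sum_single_index rfl, fun s hs => ?_, rfl⟩ ?_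
  · rw [Finset.mem_singleton.1 (Finsupp.support_single_subset hs)]
    exact adapted_neverStop (T + 1)
  rintro _ ⟨β, hβ, hβ_sum, hβ_adapted, rfl⟩
  refine (V_le_worstRatio hB₀ (Finsupp.mapDomain_nonneg hβ) ?_ ?_).trans
    (worstRatio_mapDomain_restrictHorizon_le hB₀ hβ)
  · rwa [Finsupp.sum_mapDomain_index (fun _ => rfl) fun _ _ _ => rfl]
  · intro s hs
    obtain ⟨t, ht, rfl⟩ := Finset.mem_image.1 (Finsupp.mapDomain_support hs)
    exact (hβ_adapted t ht).restrictHorizon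

/-- For fixed stopping cost `B > 1`, the competitive ratio of the
finite-horizon ski-rental problem is weakly increasing in the horizon. -/
theorem competitive_ratio_monotone_in_horizon
    (B : ℝ) (hB : 1 < B) (T : ℕ) (hT : 1 ≤ T) : V T B ≤ V (T + 1) B :=
  competitive_ratio_monotone_in_horizon_general B hB T
end

section
/- Fix T ∈ ℕ and B ∈ ℝ with 1 < B < T. For l ∈ {0,…,T}, let s_l be the stopping rule with s_l(X) = min{ i ∈ {1,…,T} : Σ_{j≤i} X_j = l+1 } (and s_l(X) = T+1 if no such i exists), and for k ∈ {1,…,T} let X^k ∈ {0,1}^T be the input with X^k_i = 1 exactly for i ≤ k. Suppose (β, γ) is a mixed Nash equilibrium of SRP-R, i.e. β and γ are probability vectors on {0,…,T} and {1,…,T} respectively with Σ_{l,k} β_l γ_k u(l,k) ≥ Σ_l β_l u(l,k') for every k' ∈ {1,…,T} and Σ_{l,k} β_l γ_k u(l,k) ≤ Σ_k γ_k u(l',k) for every l' ∈ {0,…,T}. Then the induced strategy profile is a mixed Nash equilibrium of the full ski-rental game: for every input X ∈ {0,1}^T with at least one good day, Σ_l β_l · cost(s_l, X)/OPT(X) ≤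 Σ_{l,k} β_l γ_k u(l,k), and for every adapted stopping rule s, Σ_k γ_k · cost(s, X^k)/OPT(X^k) ≥ Σ_{l,k} β_l γ_k u(l,k). -/
open Finset

/-- Number of good-weather days among the first `i` days (1-indexed) of input `X`. -/
def goodCount (T : ℕ) (X : Fin T → Bool) (i : ℕ) : ℕ :=
  (Finset.univ.filter fun j : Fin T => (j : ℕ) < i ∧ X j = true).card

/-- The stopping rule `s_l`: stop on the day on which the `(l+1)`-st good-weather day occurs,
and never stop if there are at most `l` good-weather days. -/
def sRule (T l : ℕ) (X : Fin T → Bool) : ℕ :=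
  if h : ((Finset.Icc 1 T).filter fun i => goodCount T X i = l + 1).Nonempty
  then ((Finset.Icc 1 T).filter fun i => goodCount T X i = l + 1).min' h
  else T + 1

/-- The input `X^k`: good weather exactly on the first `k` days. -/
def Xinp (T k : ℕ) : Fin T → Bool := fun i => decide ((i : ℕ) < k)

/-- The adversary's payoff in the reduced game SRP-R. -/
noncomputable def uR (B : ℝ) (l k : ℕ) : ℝ :=
  if l < k then ((l : ℝ) + B) / min (k : ℝ) B else (k : ℝ) / min (k : ℝ) B

/-!
On an input with `g ≥ 1` good days the rule `s_l` pays `l + B` if `l < g` (it rents on `l` days and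
then buys) and `g` otherwise, so its competitive ratio is exactly `u(l, g)`; the first equilibrium
inequality for the pure adversary strategy `k = g` is then the first claim.

Conversely, the inputs `X^k` and `X^T` agree on the first `k` days, so an adapted rule `s` with
`m = s(X^T)` either stops on day `m ≤ k` on `X^k`, paying `(m - 1) + B`, or is still running after
day `k`, paying at least `k`. Either way its ratio on `X^k` is at least `u(m - 1, k)`, and the second
equilibrium inequality for the pure algorithm strategy `l = m - 1` gives the second claim.
-/

theorem Nat.exists_eq_of_le_of_forall_succ_le {f : ℕ → ℕ} (hf : ∀ n, f (n + 1) ≤ f n + 1)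
    {a N : ℕ} (h0 : f 0 ≤ a) (hN : a ≤ f N) : ∃ i ≤ N, f i = a := by
  induction N with
  | zero => exact ⟨0, le_rfl, le_antisymm h0 hN⟩
  | succ N ih =>
    by_cases ha : a ≤ f N
    · obtain ⟨i, hi, hfi⟩ := ih ha
      exact ⟨i, hi.trans N.le_succ, hfi⟩
    · exact ⟨N + 1, le_rfl, by have := hf N; omega⟩

section goodCount

variable {T : ℕ} (X : Fin T → Bool)

theorem goodCount_zero : goodCount T X 0 = 0 := by
  simp [goodCount]

theorem goodCount_mono : Monotone (goodCount T X) :=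
  fun _ _ hab => card_le_card fun j hj => by
    simp only [mem_filter] at hj ⊢
    exact ⟨hj.1, hj.2.1.trans_le hab, hj.2.2⟩

theorem goodCount_of_le {i : ℕ} (hi : T ≤ i) : goodCount T X i = good T X := by
  unfold goodCount good
  congr 1
  ext j
  simp only [mem_filter, mem_univ, true_and, and_iff_right_iff_imp]
  exact fun _ => j.isLt.trans_le hi

theorem goodCount_succ_le (i : ℕ) : goodCount T X (i + 1) ≤ goodCount T X i + 1 := by
  by_cases hi : i < T
  · calc goodCount T X (i + 1)
        ≤ #(insert ⟨i, hi⟩ ({j | (j : ℕ) < i ∧ X j = true} : Finset (Fin T))) := card_le_card fun j hj => by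
          simp only [mem_filter, mem_insert, mem_univ, true_and] at hj ⊢
          rcases Nat.lt_succ_iff_lt_or_eq.mp hj.1 with h | h
          · exact Or.inr ⟨h, hj.2⟩
          · exact Or.inl (Fin.ext h)
      _ ≤ goodCount T X i + 1 := card_insert_le _ _
  · rw [goodCount_of_le X (by omega), goodCount_of_le X (by omega)]
    exact Nat.le_succ _

theorem good_le : good T X ≤ T :=
  (card_le_univ _).trans_eq (Fintype.card_fin T)

theorem exists_goodCount_eq {l n : ℕ} (h : l + 1 ≤ goodCount T X n) :
    ∃ i ∈ Icc 1 n, goodCount T X i = l + 1 := by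
  obtain ⟨i, hin, hi⟩ := Nat.exists_eq_of_le_of_forall_succ_le (goodCount_succ_le X)
    (by rw [goodCount_zero]; omega) h
  have hi1 : i ≠ 0 := by rintro rfl; rw [goodCount_zero] at hi; omega
  exact ⟨i, mem_Icc.2 ⟨Nat.one_le_iff_ne_zero.2 hi1, hin⟩, hi⟩

end goodCount

section sRule

variable {T l : ℕ} {X : Fin T → Bool}

theorem sRule_of_good_le (h : good T X ≤ l) : sRule T l X = T + 1 := by
  rw [sRule, dif_neg]
  rintro ⟨i, hi⟩
  simp only [mem_filter, mem_Icc] at hi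
  have := goodCount_mono X hi.1.2
  rw [goodCount_of_le X le_rfl] at this
  omega

theorem sRule_spec (h : l < good T X) :
    sRule T l X ∈ Icc 1 T ∧ goodCount T X (sRule T l X - 1) = l := by
  set S := (Icc 1 T).filter fun i => goodCount T X i = l + 1
  have hS : S.Nonempty := by
    obtain ⟨i, hi, hgi⟩ := exists_goodCount_eq X (n := T) (l := l)
      (by rw [goodCount_of_le X le_rfl]; omega)
    exact ⟨i, mem_filter.2 ⟨hi, hgi⟩⟩
  have hrule : sRule T l X = S.min' hS := by rw [sRule, dif_pos hS]
  obtain ⟨hmem, hgm⟩ := mem_filter.1 (S.min'_mem hS)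
  rw [hrule]
  refine ⟨hmem, ?_⟩
  set m := S.min' hS
  have hm := mem_Icc.1 hmem
  have hlow : l ≤ goodCount T X (m - 1) := by
    have := goodCount_succ_le X (m - 1)
    rw [Nat.sub_add_cancel hm.1] at this
    omega
  have hup : ¬ l + 1 ≤ goodCount T X (m - 1) := fun hc => by
    obtain ⟨i, hi, hgi⟩ := exists_goodCount_eq X hc
    have hi := mem_Icc.1 hi
    have := S.min'_le i (mem_filter.2 ⟨mem_Icc.2 ⟨hi.1, by omega⟩, hgi⟩)
    omega
  omega

end sRule

theorem cost_eq {T : ℕ} (B : ℝ) {s : (Fin T → Bool) → ℕ} {X : Fin T → Bool} (hs : 1 ≤ s X) :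
    cost T B s X = goodCount T X (s X - 1) + if s X ≤ T then B else 0 := by
  rw [cost, sum_boole]
  congr 3
  ext i
  simp only [mem_filter, mem_univ, true_and]
  exact and_congr_left' (by omega)

theorem cost_sRule_div_OPTX (T l : ℕ) (B : ℝ) (X : Fin T → Bool) :
    cost T B (sRule T l) X / OPTX T B X = uR B l (good T X) := by
  rw [OPTX, uR]
  by_cases hl : l < good T X
  · obtain ⟨hmem, hcount⟩ := sRule_spec hl
    rw [cost_eq B (mem_Icc.1 hmem).1, if_pos (mem_Icc.1 hmem).2, hcount, if_pos hl]
  · rw [cost_eq B (by rw [sRule_of_good_le (by omega)]; omega), sRule_of_good_le (by omega),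
      if_neg (by omega), Nat.add_sub_cancel, goodCount_of_le X le_rfl, if_neg hl, add_zero]

section Xinp

variable {T : ℕ}

theorem goodCount_Xinp (k i : ℕ) : goodCount T (Xinp T k) i = min T (min i k) := by
  rw [goodCount, ← Fin.card_filter_val_lt]
  congr 1
  ext j
  simp [Xinp]

theorem good_Xinp {k : ℕ} (hk : k ≤ T) : good T (Xinp T k) = k := by
  rw [← goodCount_of_le _ le_rfl, goodCount_Xinp]
  omega

theorem Xinp_eq_Xinp {k k' : ℕ} {i : Fin T} (hk : (i : ℕ) < k) (hk' : (i : ℕ) < k') :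
    Xinp T k i = Xinp T k' i := by
  simp [Xinp, hk, hk']

end Xinp

namespace Adapted

variable {T : ℕ} {s : (Fin T → Bool) → ℕ} {X Y : Fin T → Bool} {n : ℕ}

theorem apply_eq_of_agree (hs : Adapted T s) (hXY : ∀ i : Fin T, (i : ℕ) < n → X i = Y i)
    (hn : s X ≤ n) : s Y = s X :=
  hs.2 X Y fun i hi => hXY i (by omega)

theorem lt_apply_of_agree (hs : Adapted T s) (hXY : ∀ i : Fin T, (i : ℕ) < n → X i = Y i)
    (hn : n < s X) : n < s Y := by
  by_contra! h
  have := hs.apply_eq_of_agree (fun i hi => (hXY i hi).symm) h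
  omega

end Adapted

theorem uR_le_cost_div_OPTX_Xinp {T k : ℕ} {B : ℝ} (hB : 0 < B) {s : (Fin T → Bool) → ℕ}
    (hs : Adapted T s) (hk : k ∈ Icc 1 T) :
    uR B (s (Xinp T T) - 1) k ≤ cost T B s (Xinp T k) / OPTX T B (Xinp T k) := by
  obtain ⟨hk1, hkT⟩ := mem_Icc.1 hk
  have hagree : ∀ i : Fin T, (i : ℕ) < k → Xinp T T i = Xinp T k i :=
    fun i hi => Xinp_eq_Xinp i.isLt hi
  have hm1 := (hs.1 (Xinp T T)).1
  have hOPT : OPTX T B (Xinp T k) = min (k : ℝ) B := by rw [OPTX, good_Xinp hkT]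
  rw [uR, hOPT]
  rcases le_or_gt (s (Xinp T T)) k with hm | hm
  · have hsk := hs.apply_eq_of_agree hagree hm
    rw [if_pos (by omega), cost_eq B (hsk ▸ hm1), hsk, if_pos (by omega), goodCount_Xinp,
      show min T (min (s (Xinp T T) - 1) k) = s (Xinp T T) - 1 by omega]
  · have hsk := hs.lt_apply_of_agree hagree hm
    rw [if_neg (by omega), cost_eq B (by omega), goodCount_Xinp,
      show min T (min (s (Xinp T k) - 1) k) = k by omega]
    have hpos : (0 : ℝ) < min (k : ℝ) B := lt_min (by exact_mod_cast hk1) hB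
    gcongr
    split_ifs <;> linarith

theorem srpr_equilibrium_is_full_game_equilibrium_general
    (T : ℕ) (B : ℝ) (hB : 1 < B)
    (β γ : ℕ → ℝ)
    (hγ0 : ∀ k ∈ Finset.Icc 1 T, 0 ≤ γ k)
    (hNE1 : ∀ k' ∈ Finset.Icc 1 T,
      ∑ l ∈ Finset.range (T + 1), β l * uR B l k'
        ≤ ∑ l ∈ Finset.range (T + 1), ∑ k ∈ Finset.Icc 1 T, β l * γ k * uR B l k)
    (hNE2 : ∀ l' ∈ Finset.range (T + 1),
      ∑ l ∈ Finset.range (T + 1), ∑ k ∈ Finset.Icc 1 T, β l * γ k * uR B l k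
        ≤ ∑ k ∈ Finset.Icc 1 T, γ k * uR B l' k) :
    (∀ X : Fin T → Bool, 1 ≤ good T X →
      ∑ l ∈ Finset.range (T + 1), β l * (cost T B (sRule T l) X / OPTX T B X)
        ≤ ∑ l ∈ Finset.range (T + 1), ∑ k ∈ Finset.Icc 1 T, β l * γ k * uR B l k) ∧
    (∀ s : (Fin T → Bool) → ℕ, Adapted T s →
      ∑ l ∈ Finset.range (T + 1), ∑ k ∈ Finset.Icc 1 T, β l * γ k * uR B l k
        ≤ ∑ k ∈ Finset.Icc 1 T, γ k * (cost T B s (Xinp T k) / OPTX T B (Xinp T k))) := by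
  refine ⟨fun X hX => ?_, fun s hs => ?_⟩
  · simp only [cost_sRule_div_OPTX]
    exact hNE1 _ (mem_Icc.2 ⟨hX, good_le X⟩)
  · have hm := hs.1 (Xinp T T)
    calc _ ≤ ∑ k ∈ Icc 1 T, γ k * uR B (s (Xinp T T) - 1) k :=
          hNE2 _ (mem_range.2 (by omega))
      _ ≤ _ := sum_le_sum fun k hk =>
          mul_le_mul_of_nonneg_left (uR_le_cost_div_OPTX_Xinp (by linarith) hs hk) (hγ0 k hk)

/-- Any mixed Nash equilibrium `(β, γ)` of the reduced game SRP-R induces a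
mixed Nash equilibrium of the full ski-rental game: the induced randomized algorithm guarantees
the equilibrium value against every input with at least one good day, and the induced
randomized input guarantees the equilibrium value against every adapted stopping rule. -/
theorem srpr_equilibrium_is_full_game_equilibrium
    (T : ℕ) (B : ℝ) (hB : 1 < B) (hBT : B < T)
    (β γ : ℕ → ℝ)
    (hβ0 : ∀ l ∈ Finset.range (T + 1), 0 ≤ β l)
    (hβ1 : ∑ l ∈ Finset.range (T + 1), β l = 1)
    (hγ0 : ∀ k ∈ Finset.Icc 1 T, 0 ≤ γ k)
    (hγ1 : ∑ k ∈ Finset.Icc 1 T, γ k = 1)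
    (hNE1 : ∀ k' ∈ Finset.Icc 1 T,
      ∑ l ∈ Finset.range (T + 1), β l * uR B l k'
        ≤ ∑ l ∈ Finset.range (T + 1), ∑ k ∈ Finset.Icc 1 T, β l * γ k * uR B l k)
    (hNE2 : ∀ l' ∈ Finset.range (T + 1),
      ∑ l ∈ Finset.range (T + 1), ∑ k ∈ Finset.Icc 1 T, β l * γ k * uR B l k
        ≤ ∑ k ∈ Finset.Icc 1 T, γ k * uR B l' k) :
    (∀ X : Fin T → Bool, 1 ≤ good T X →
      ∑ l ∈ Finset.range (T + 1), β l * (cost T B (sRule T l) X / OPTX T B X)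
        ≤ ∑ l ∈ Finset.range (T + 1), ∑ k ∈ Finset.Icc 1 T, β l * γ k * uR B l k) ∧
    (∀ s : (Fin T → Bool) → ℕ, Adapted T s →
      ∑ l ∈ Finset.range (T + 1), ∑ k ∈ Finset.Icc 1 T, β l * γ k * uR B l k
        ≤ ∑ k ∈ Finset.Icc 1 T, γ k * (cost T B s (Xinp T k) / OPTX T B (Xinp T k))) :=
  srpr_equilibrium_is_full_game_equilibrium_general T B hB β γ hγ0 hNE1 hNE2
end

section
/- Fix T ∈ ℕ and B ∈ ℝ with 1 < B ≤ T. In SRP-R: (i) every adversary pure strategy k with ⌈B⌉ ≤ k ≤ T−1 is weakly dominated by k = T, i.e. u(l,k) ≤ u(l,T) for all l ∈ {0,…,T}; and (ii) every algorithm pure strategy l with T−⌊B⌋ ≤ l ≤ T−1 is weakly dominated by l = T, i.e. u(T,k) ≤ u(l,k) for all k ∈ {1,…,T}. -/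
/-! Once `B ≤ k` the denominator `min k B` is the constant `B`, so raising the adversary's
`k` to `T` can only raise the numerator. Dually, when `T ≤ l + B` the numerator `l + B` of a
late buyer `l < k` is at least the numerator `k ≤ T` of `l = T`. -/

section

variable {B : ℝ} {l k : ℕ}

lemma uR_of_lt (h : l < k) : uR B l k = ((l : ℝ) + B) / min (k : ℝ) B := if_pos h

lemma uR_of_le (h : k ≤ l) : uR B l k = (k : ℝ) / min (k : ℝ) B := if_neg h.not_gt

lemma uR_le_uR_right_of_le {T : ℕ} (hB : 0 ≤ B) (hBk : B ≤ k) (hkT : k ≤ T) (l : ℕ) :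
    uR B l k ≤ uR B l T := by
  have hBT : B ≤ T := hBk.trans (by exact_mod_cast hkT)
  rcases lt_or_ge l k with hlk | hkl
  · rw [uR_of_lt hlk, uR_of_lt (hlk.trans_le hkT), min_eq_right hBk, min_eq_right hBT]
  rw [uR_of_le hkl, min_eq_right hBk]
  have hkl' : (k : ℝ) ≤ l := by exact_mod_cast hkl
  rcases lt_or_ge l T with hlT | hTl
  · rw [uR_of_lt hlT, min_eq_right hBT]
    gcongr
    linarith
  · rw [uR_of_le hTl, min_eq_right hBT]
    gcongr

lemma uR_le_uR_left_of_le_add {T : ℕ} (hB : 0 ≤ B) (hkT : k ≤ T) (hT : (T : ℝ) ≤ l + B) :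
    uR B T k ≤ uR B l k := by
  rw [uR_of_le hkT]
  rcases lt_or_ge l k with hlk | hkl
  · rw [uR_of_lt hlk]
    have hk_le_T : (k : ℝ) ≤ T := by exact_mod_cast hkT
    gcongr
    linarith
  · rw [uR_of_le hkl]

end

theorem srpr_weak_domination_general
    (T : ℕ) (B : ℝ) (hB : 1 < B) :
    (∀ k, ⌈B⌉₊ ≤ k → k ≤ T - 1 → ∀ l ≤ T, uR B l k ≤ uR B l T) ∧
    (∀ l, T - ⌊B⌋₊ ≤ l → l ≤ T - 1 → ∀ k ∈ Finset.Icc 1 T, uR B T k ≤ uR B l k) := by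
  have hB0 : 0 ≤ B := by linarith
  refine ⟨fun k hk hkT l _ => ?_, fun l hl _ k hk => ?_⟩
  · have hBk : B ≤ k := (Nat.le_ceil B).trans (by exact_mod_cast hk)
    exact uR_le_uR_right_of_le hB0 hBk (by omega) l
  · have hT : (T : ℝ) ≤ l + B :=
      calc (T : ℝ) ≤ ((l + ⌊B⌋₊ : ℕ) : ℝ) := by exact_mod_cast (by omega : T ≤ l + ⌊B⌋₊)
        _ ≤ l + B := by push_cast; linarith [Nat.floor_le hB0]
    exact uR_le_uR_left_of_le_add hB0 (Finset.mem_Icc.mp hk).2 hT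

/-- In SRP-R with `1 < B ≤ T`: (i) every adversary pure strategy
`k ∈ {⌈B⌉,…,T−1}` is weakly dominated by `k = T`, and (ii) every algorithm pure strategy
`l ∈ {T−⌊B⌋,…,T−1}` is weakly dominated by `l = T`. -/
theorem srpr_weak_domination
    (T : ℕ) (B : ℝ) (hB : 1 < B) (hBT : B ≤ T) :
    (∀ k, ⌈B⌉₊ ≤ k → k ≤ T - 1 → ∀ l ≤ T, uR B l k ≤ uR B l T) ∧
    (∀ l, T - ⌊B⌋₊ ≤ l → l ≤ T - 1 → ∀ k ∈ Finset.Icc 1 T, uR B T k ≤ uR B l k) :=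
  srpr_weak_domination_general T B hB
end

section
/- Fix T ≥ 1, B > 1, p ∈ [0,1], and a natural number k with 0 ≤ k ≤ T. Let s_k be the stopping rule that stops at the first good-weather day among days 1,…,k and otherwise never stops, i.e. s_k(X) = min{ i ∈ {1,…,k} : X_i = 1 } (and s_k(X) = T+1 if X_i = 0 for all i ≤ k). Then E_p[cost(s_k, X)] = B·(1 − (1−p)^k) + (1−p)^k · p · (T−k). -/
open Finset

/-- The stopping rule `s_k`: stop at the first good-weather day among days `1,…,k`, and never
stop if all of the first `k` days have bad weather. -/
def ruleK (T k : ℕ) (X : Fin T → Bool) : ℕ :=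
  if h : (Finset.univ.filter fun j : Fin T => (j : ℕ) < k ∧ X j = true).Nonempty
  then (((Finset.univ.filter fun j : Fin T => (j : ℕ) < k ∧ X j = true).min' h : Fin T) : ℕ) + 1
  else T + 1

/-!
On the event `A` that days `1,…,k` all have bad weather, `s_k` never stops and pays one unit per
good day, all of which fall after day `k`; off `A` it stops at the first good day, before which it
paid nothing, and pays `B`. So `E[cost] = B·(1 − P(A)) + Σ_{j > k} E[1_A · X_j]`, and since the
Bernoulli measure is a product measure, the expectation of a product of one-coordinate factors is
the product of their expectations: `P(A) = (1−p)^k` and `E[1_A · X_j] = (1−p)^k · p` for `j > k`.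
-/

lemma prod_fin_ite_val_lt {M : Type*} [CommMonoid M] {T k : ℕ} (hk : k ≤ T) (c : M) :
    ∏ i : Fin T, (if (i : ℕ) < k then c else 1) = c ^ k := by
  rw [prod_ite, prod_const_one, mul_one, prod_const, Fin.card_filter_val_lt, min_eq_right hk]

lemma sum_fin_ite_val_lt {T k : ℕ} (hk : k ≤ T) (c : ℝ) :
    ∑ i : Fin T, (if (i : ℕ) < k then 0 else c) = (T - k : ℝ) * c := by
  have hcard := card_filter_add_card_filter_not (s := (univ : Finset (Fin T)))
    (fun i : Fin T => (i : ℕ) < k)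
  rw [Fin.card_filter_val_lt, min_eq_right hk, card_univ, Fintype.card_fin] at hcard
  rw [sum_ite, sum_const_zero, zero_add, sum_const, nsmul_eq_mul,
    show #{i : Fin T | ¬(i : ℕ) < k} = T - k by omega, Nat.cast_sub hk]

section Expectation

variable {T : ℕ} {p : ℝ}

lemma weight_eq_prod (X : Fin T → Bool) :
    p ^ good T X * (1 - p) ^ (T - good T X) = ∏ i, if X i then p else 1 - p := by
  have hcard := card_filter_add_card_filter_not (s := (univ : Finset (Fin T)))
    (fun i => X i = true)
  rw [card_univ, Fintype.card_fin] at hcard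
  rw [prod_ite, prod_const, prod_const, good]
  congr 2
  omega

lemma Ep_add (f g : (Fin T → Bool) → ℝ) :
    Ep T p (fun X => f X + g X) = Ep T p f + Ep T p g := by
  simp only [Ep, mul_add, sum_add_distrib]

lemma Ep_sub (f g : (Fin T → Bool) → ℝ) :
    Ep T p (fun X => f X - g X) = Ep T p f - Ep T p g := by
  simp only [Ep, mul_sub, sum_sub_distrib]

lemma Ep_const_mul (c : ℝ) (f : (Fin T → Bool) → ℝ) :
    Ep T p (fun X => c * f X) = c * Ep T p f := by
  simp only [Ep, mul_sum, mul_left_comm]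

lemma Ep_sum {ι : Type*} (s : Finset ι) (f : ι → (Fin T → Bool) → ℝ) :
    Ep T p (fun X => ∑ j ∈ s, f j X) = ∑ j ∈ s, Ep T p (f j) := by
  simp only [Ep, mul_sum]
  exact sum_comm

lemma Ep_prod (f : Fin T → Bool → ℝ) :
    Ep T p (fun X => ∏ i, f i (X i)) = ∏ i, (p * f i true + (1 - p) * f i false) := by
  simp only [Ep, weight_eq_prod, ← prod_mul_distrib]
  rw [← Fintype.piFinset_univ, sum_prod_piFinset univ fun i b => (if b then p else 1 - p) * f i b]
  simp only [Fintype.sum_bool, if_true, Bool.false_eq_true, if_false]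

lemma Ep_const (c : ℝ) : Ep T p (fun _ => c) = c := by
  have h := Ep_prod (T := T) (p := p) fun _ _ => 1
  simp only [prod_const_one, mul_one, add_sub_cancel] at h
  simpa [h] using Ep_const_mul (T := T) (p := p) c fun _ => 1

end Expectation

lemma cost_eq_good_of_lt {T : ℕ} {B : ℝ} {s : (Fin T → Bool) → ℕ} {X : Fin T → Bool}
    (hs : T < s X) : cost T B s X = good T X := by
  rw [cost, if_neg hs.not_ge, add_zero, good, ← sum_boole]
  exact sum_congr rfl fun i _ => by simp only [show (i : ℕ) + 1 < s X by omega, true_and]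

lemma cost_eq_of_le_of_forall_bad {T : ℕ} {B : ℝ} {s : (Fin T → Bool) → ℕ} {X : Fin T → Bool}
    (hs : s X ≤ T) (hbad : ∀ i : Fin T, (i : ℕ) + 1 < s X → X i = false) : cost T B s X = B := by
  rw [cost, if_pos hs, sum_eq_zero fun i _ => if_neg fun h => by simp [hbad i h.1] at h, zero_add]

section ruleK

variable {T k : ℕ} {X : Fin T → Bool}

lemma ruleK_eq_of_forall_bad (h : ∀ i : Fin T, (i : ℕ) < k → X i = false) :
    ruleK T k X = T + 1 := by
  rw [ruleK, dif_neg]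
  rintro ⟨i, hi⟩
  simp only [mem_filter, mem_univ, true_and] at hi
  simp [h i hi.1] at hi

lemma ruleK_spec_of_exists_good (h : ∃ i : Fin T, (i : ℕ) < k ∧ X i = true) :
    ruleK T k X ≤ T ∧ ∀ i : Fin T, (i : ℕ) + 1 < ruleK T k X → X i = false := by
  have hS : (univ.filter fun j : Fin T => (j : ℕ) < k ∧ X j = true).Nonempty :=
    let ⟨i, hi⟩ := h; ⟨i, by simpa using hi⟩
  rw [ruleK, dif_pos hS]
  set m := (univ.filter fun j : Fin T => (j : ℕ) < k ∧ X j = true).min' hS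
  have hm : (m : ℕ) < k := (mem_filter.mp (min'_mem _ hS)).2.1
  refine ⟨m.isLt, fun i hi => Bool.eq_false_iff.mpr fun hXi => ?_⟩
  have hmi : (m : ℕ) ≤ i := min'_le _ i (by simp [hXi]; omega)
  omega

lemma cost_ruleK (B : ℝ) (X : Fin T → Bool) :
    cost T B (ruleK T k) X =
      if ∀ i : Fin T, (i : ℕ) < k → X i = false then (good T X : ℝ) else B := by
  split_ifs with h
  · exact cost_eq_good_of_lt (by rw [ruleK_eq_of_forall_bad h]; omega)
  · obtain ⟨hle, hbad⟩ := ruleK_spec_of_exists_good (by simpa using h)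
    exact cost_eq_of_le_of_forall_bad hle hbad

end ruleK

def noGoodBefore (T k : ℕ) (X : Fin T → Bool) : ℝ :=
  ∏ i : Fin T, if (i : ℕ) < k → X i = false then 1 else 0

section noGoodBefore

variable {T k : ℕ} {p : ℝ}

lemma noGoodBefore_eq_ite (X : Fin T → Bool) :
    noGoodBefore T k X = if ∀ i : Fin T, (i : ℕ) < k → X i = false then 1 else 0 := by
  unfold noGoodBefore
  convert Fintype.prod_boole

lemma Ep_noGoodBefore (hk : k ≤ T) : Ep T p (noGoodBefore T k) = (1 - p) ^ k := by
  refine (Ep_prod fun i b => if (i : ℕ) < k → b = false then 1 else 0).trans ?_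
  rw [← prod_fin_ite_val_lt hk]
  congr 1 with i
  by_cases hi : (i : ℕ) < k <;> simp [hi]

lemma Ep_noGoodBefore_mul (hk : k ≤ T) (j : Fin T) :
    Ep T p (fun X => noGoodBefore T k X * if X j then 1 else 0)
      = if (j : ℕ) < k then 0 else p * (1 - p) ^ k := by
  let f : Fin T → Bool → ℝ := fun i b =>
    (if (i : ℕ) < k → b = false then 1 else 0) * if i = j then (if b then 1 else 0) else 1
  have hprod : (fun X => noGoodBefore T k X * if X j then 1 else 0) = fun X => ∏ i, f i (X i) := by
    funext X
    rw [prod_mul_distrib, Fintype.prod_ite_eq', noGoodBefore]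
  rw [hprod, Ep_prod]
  by_cases hj : (j : ℕ) < k
  · rw [if_pos hj]
    exact prod_eq_zero (mem_univ j) (by simp [f, hj])
  · rw [if_neg hj, ← prod_fin_ite_val_lt hk, ← Fintype.prod_ite_eq' j (fun _ => p),
      ← prod_mul_distrib]
    congr 1 with i
    by_cases hij : i = j
    · subst hij; simp [f, hj]
    · by_cases hi : (i : ℕ) < k <;> simp [f, hi, hij]

end noGoodBefore

theorem expected_cost_ruleK_general
    (T : ℕ) (B : ℝ) (p : ℝ) (k : ℕ) (hk : k ≤ T) :
    Ep T p (cost T B (ruleK T k))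
      = B * (1 - (1 - p) ^ k) + (1 - p) ^ k * p * ((T : ℝ) - (k : ℝ)) := by
  have hcost : cost T B (ruleK T k) = fun X =>
      B + ∑ j, noGoodBefore T k X * (if X j then 1 else 0) - B * noGoodBefore T k X := by
    funext X
    rw [cost_ruleK, noGoodBefore_eq_ite, ← mul_sum, sum_boole, good]
    split_ifs <;> simp
  rw [hcost, Ep_sub, Ep_add, Ep_const, Ep_sum, Ep_const_mul, Ep_noGoodBefore hk]
  simp only [Ep_noGoodBefore_mul hk, sum_fin_ite_val_lt hk]
  ring

/-- The expected cost of the rule `s_k` under the i.i.d. Bernoulli(p) input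
distribution is `B·(1 − (1−p)^k) + (1−p)^k·p·(T−k)`. -/
theorem expected_cost_ruleK
    (T : ℕ) (hT : 1 ≤ T) (B : ℝ) (hB : 1 < B) (p : ℝ) (hp : p ∈ Set.Icc (0 : ℝ) 1)
    (k : ℕ) (hk : k ≤ T) :
    Ep T p (cost T B (ruleK T k))
      = B * (1 - (1 - p) ^ k) + (1 - p) ^ k * p * ((T : ℝ) - (k : ℝ)) :=
  expected_cost_ruleK_general T B p k hk
end

section
/- Fix T ≥ 1 and B > 1. Let P be a probability distribution with finite support contained in (0,1], and define the prior-independent objective Φ(s) := Σ_{p ∈ supp(P)} P(p) · E_p[cost(s,X)] / OPT*(p) over adapted stopping rules s. Then there exists an adapted stopping rule s minimizing Φ over all adapted stopping rules which (i) never stops on a bad-weather day (s(X) ≤ T implies X_{s(X)} = 1), and (ii) is information-symmetric: for every day i ∈ {1,…,T} and all inputs X, Y with s(X) ≥ i and s(Y) ≥ i, if Σ_{j<i} X_j = Σ_{j<i} Y_j and X_i = Y_i, then s(X) = i if and only if s(Y) = i (the stop/continue decision at day i depends only on the number of good days among the first i−1 days and the weather on day i). -/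
open Finset

/-- The Bayesian optimal cost: the least expected cost over adapted stopping rules. -/
noncomputable def OPTstar (T : ℕ) (B p : ℝ) : ℝ :=
  sInf { v : ℝ | ∃ s : (Fin T → Bool) → ℕ, Adapted T s ∧ v = Ep T p (cost T B s) }


/-!
Since `OPT*(p)` is a constant for each `p`, the objective is `Φ(s) = ∑_X m(#good X) · cost(s, X)`
with `m(k) = ∑_p P(p)/OPT*(p) · p^k (1-p)^(T-k)`: a nonnegative weight that depends on `X` only
through its number of good days. Backward induction over (days remaining, good days so far) then
gives a value `V` with `V ≤ Φ(s)` for every adapted rule, and `V` is attained by the rule that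
stops on a good day exactly when buying is no more expensive than renting and continuing
optimally. That rule sees only the current good-day count and today's weather, and it never stops
on a bad day, since a bad day costs nothing and the continuation value is at most `B` times the
remaining mass.
-/

namespace RentOrBuy

lemma sum_fun_succ_eq_sum_cons {M : Type*} [AddCommMonoid M] {T : ℕ}
    (f : (Fin (T + 1) → Bool) → M) :
    ∑ X, f X = ∑ b : Bool, ∑ Y : Fin T → Bool, f (Fin.cons b Y) := by
  rw [← (Fin.consEquiv fun _ => Bool).sum_comp, Fintype.sum_prod_type]
  rfl

lemma good_cons {T : ℕ} (b : Bool) (Y : Fin T → Bool) :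
    good (T + 1) (Fin.cons b Y) = b.toNat + good T Y := by
  simp only [good, Finset.card_filter, Fin.sum_univ_succ, Fin.cons_zero, Fin.cons_succ]
  cases b <;> simp

lemma goodCount_zero {T : ℕ} (X : Fin T → Bool) : goodCount T X 0 = 0 := by
  simp [goodCount]

lemma goodCount_cons_succ {T : ℕ} (b : Bool) (Y : Fin T → Bool) (j : ℕ) :
    goodCount (T + 1) (Fin.cons b Y) (j + 1) = b.toNat + goodCount T Y j := by
  simp only [goodCount, Finset.card_filter, Fin.sum_univ_succ, Fin.cons_zero, Fin.cons_succ,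
    Fin.val_zero, Fin.val_succ, add_lt_add_iff_right]
  cases b <;> simp

lemma cost_nonneg {T : ℕ} {B : ℝ} (hB : 0 ≤ B) (s : (Fin T → Bool) → ℕ) (X : Fin T → Bool) :
    0 ≤ cost T B s X := by
  unfold cost
  refine add_nonneg (Finset.sum_nonneg fun i _ => ?_) ?_ <;> split_ifs <;> simp [hB]

lemma cost_of_adapted_zero {B : ℝ} {s : (Fin 0 → Bool) → ℕ} (hs : Adapted 0 s)
    (X : Fin 0 → Bool) : cost 0 B s X = 0 := by
  have := (hs.1 X).1
  simp [cost, show ¬ s X ≤ 0 by omega]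

lemma Ep_nonneg {T : ℕ} {p : ℝ} (hp0 : 0 ≤ p) (hp1 : p ≤ 1) {f : (Fin T → Bool) → ℝ}
    (hf : ∀ X, 0 ≤ f X) : 0 ≤ Ep T p f :=
  Finset.sum_nonneg fun X _ =>
    mul_nonneg (mul_nonneg (pow_nonneg hp0 _) (pow_nonneg (sub_nonneg.2 hp1) _)) (hf X)

lemma OPTstar_nonneg (T : ℕ) {B p : ℝ} (hB : 0 ≤ B) (hp0 : 0 ≤ p) (hp1 : p ≤ 1) :
    0 ≤ OPTstar T B p :=
  Real.sInf_nonneg fun _ ⟨s, _, hv⟩ => hv ▸ Ep_nonneg hp0 hp1 (cost_nonneg hB s)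

section Cons

variable {T : ℕ} {B : ℝ} {s : (Fin (T + 1) → Bool) → ℕ} {b : Bool} {Y : Fin T → Bool}

lemma cost_cons_of_eq_one (h : s (Fin.cons b Y) = 1) : cost (T + 1) B s (Fin.cons b Y) = B := by
  simp [cost, h]

lemma cost_cons_of_eq_succ {t : (Fin T → Bool) → ℕ} (h : s (Fin.cons b Y) = t Y + 1)
    (ht : 1 ≤ t Y) : cost (T + 1) B s (Fin.cons b Y) = b.toNat + cost T B t Y := by
  simp only [cost, h, Fin.sum_univ_succ, Fin.cons_zero, Fin.cons_succ, Fin.val_zero,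
    Fin.val_succ, add_lt_add_iff_right, add_le_add_iff_right]
  have ht0 : t Y ≠ 0 := by omega
  cases b <;> simp [ht0, add_assoc]

lemma _root_.Adapted.eq_one_of_cons (hs : Adapted (T + 1) s) {Y₀ : Fin T → Bool}
    (h : s (Fin.cons b Y₀) = 1) (Y : Fin T → Bool) : s (Fin.cons b Y) = 1 := by
  refine (hs.2 _ _ fun i hi => ?_).trans h
  rw [h] at hi
  obtain rfl : i = 0 := Fin.ext (by rw [Fin.val_zero]; omega)
  simp

lemma _root_.Adapted.cons_tail (hs : Adapted (T + 1) s) (h : ∀ Y, s (Fin.cons b Y) ≠ 1) :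
    Adapted T (fun Y => s (Fin.cons b Y) - 1) := by
  have h2 (Y : Fin T → Bool) : 2 ≤ s (Fin.cons b Y) := by
    have := (hs.1 (Fin.cons b Y)).1; have := h Y; omega
  refine ⟨fun Y => ?_, fun Y Y' hYY' => ?_⟩
  · have := h2 Y
    have := (hs.1 (Fin.cons b Y)).2
    dsimp only
    omega
  dsimp only at hYY' ⊢
  have : s (Fin.cons b Y') = s (Fin.cons b Y) := hs.2 _ _ fun i hi => by
    cases i using Fin.cases with
    | zero => simp
    | succ j =>
      simp only [Fin.cons_succ]
      have := h2 Y
      exact hYY' j (by simp only [Fin.val_succ] at hi; omega)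
  simp only [this]

end Cons

def mass (m : ℕ → ℝ) (r k : ℕ) : ℝ :=
  ∑ Y : Fin r → Bool, m (k + good r Y)

noncomputable def objective (T : ℕ) (m : ℕ → ℝ) (B : ℝ) (k : ℕ) (s : (Fin T → Bool) → ℕ) : ℝ :=
  ∑ X : Fin T → Bool, m (k + good T X) * cost T B s X

/-- Bellman recursion: a bad day is free and never worth stopping on; on a good day one either
buys (`B` on the whole mass) or rents for one day and continues. -/
noncomputable def value (m : ℕ → ℝ) (B : ℝ) : ℕ → ℕ → ℝ
  | 0, _ => 0
  | r + 1, k => value m B r k + min (B * mass m r (k + 1)) (mass m r (k + 1) + value m B r (k + 1))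

def BuyNow (m : ℕ → ℝ) (B : ℝ) (r k : ℕ) : Prop :=
  B * mass m r (k + 1) ≤ mass m r (k + 1) + value m B r (k + 1)

section Objective

variable {m : ℕ → ℝ} {B : ℝ}

lemma mass_succ (r k : ℕ) : mass m (r + 1) k = mass m r k + mass m r (k + 1) := by
  simp [mass, sum_fun_succ_eq_sum_cons, good_cons, add_comm, add_left_comm]

lemma objective_succ (T k : ℕ) (s : (Fin (T + 1) → Bool) → ℕ) :
    objective (T + 1) m B k s =
      ∑ b : Bool, ∑ Y : Fin T → Bool,
        m (k + b.toNat + good T Y) * cost (T + 1) B s (Fin.cons b Y) := by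
  simp [objective, sum_fun_succ_eq_sum_cons, good_cons, add_assoc]

lemma sum_cons_mul_cost_of_stop {T k : ℕ} {s : (Fin (T + 1) → Bool) → ℕ} {b : Bool}
    (h : ∀ Y, s (Fin.cons b Y) = 1) :
    ∑ Y : Fin T → Bool, m (k + b.toNat + good T Y) * cost (T + 1) B s (Fin.cons b Y) =
      B * mass m T (k + b.toNat) := by
  simp [cost_cons_of_eq_one (h _), mass, Finset.mul_sum, mul_comm]

lemma sum_cons_mul_cost_of_continue {T k : ℕ} {s : (Fin (T + 1) → Bool) → ℕ} {b : Bool}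
    {t : (Fin T → Bool) → ℕ} (h : ∀ Y, s (Fin.cons b Y) = t Y + 1) (ht : ∀ Y, 1 ≤ t Y) :
    ∑ Y : Fin T → Bool, m (k + b.toNat + good T Y) * cost (T + 1) B s (Fin.cons b Y) =
      b.toNat * mass m T (k + b.toNat) + objective T m B (k + b.toNat) t := by
  simp [cost_cons_of_eq_succ (h _) (ht _), mass, objective, Finset.mul_sum, mul_add,
    Finset.sum_add_distrib, mul_comm]

lemma value_le_mul_mass (hB : 0 ≤ B) (hm : ∀ k, 0 ≤ m k) (r k : ℕ) :
    value m B r k ≤ B * mass m r k := by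
  induction r generalizing k with
  | zero => simpa [value, mass, good] using mul_nonneg hB (hm k)
  | succ r ih =>
    calc value m B (r + 1) k ≤ B * mass m r k + B * mass m r (k + 1) :=
          add_le_add (ih k) (min_le_left _ _)
      _ = B * mass m (r + 1) k := by rw [mass_succ, mul_add]

theorem value_le_objective (hB : 0 ≤ B) (hm : ∀ k, 0 ≤ m k) {T : ℕ} (k : ℕ)
    {s : (Fin T → Bool) → ℕ} (hs : Adapted T s) : value m B T k ≤ objective T m B k s := by
  induction T generalizing k with
  | zero => simp [value, objective, cost_of_adapted_zero hs]
  | succ T ih =>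
    have branch (b : Bool) :
        min (B * mass m T (k + b.toNat))
            (b.toNat * mass m T (k + b.toNat) + value m B T (k + b.toNat)) ≤
          ∑ Y : Fin T → Bool, m (k + b.toNat + good T Y) * cost (T + 1) B s (Fin.cons b Y) := by
      by_cases hbuy : ∃ Y₀, s (Fin.cons b Y₀) = 1
      · obtain ⟨Y₀, hY₀⟩ := hbuy
        rw [sum_cons_mul_cost_of_stop (hs.eq_one_of_cons hY₀)]
        exact min_le_left _ _
      · push Not at hbuy
        have htail := hs.cons_tail hbuy
        rw [sum_cons_mul_cost_of_continue (t := fun Y => s (Fin.cons b Y) - 1)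
          (fun Y => by have := (htail.1 Y).1; dsimp only at this ⊢; omega) fun Y => (htail.1 Y).1]
        exact (min_le_right _ _).trans (add_le_add_right (ih _ htail) _)
    have hfalse := branch false
    have htrue := branch true
    rw [objective_succ, Fintype.sum_bool, value]
    simp only [Bool.toNat_false, Bool.toNat_true, Nat.cast_zero, Nat.cast_one, zero_mul, zero_add,
      add_zero, one_mul, min_eq_right (value_le_mul_mass hB hm T k)] at hfalse htrue ⊢
    linarith

end Objective

section SymmetricRule

open Classical in
/-- The rule that stops on the first good day `i` (0-indexed) on which `buy i k` holds, `k` being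
the number of good days before `i`. -/
noncomputable def symmetricRule : (T : ℕ) → (ℕ → ℕ → Prop) → (Fin T → Bool) → ℕ
  | 0, _, _ => 1
  | T + 1, buy, X =>
    if X 0 = true ∧ buy 0 0 then 1
    else symmetricRule T (fun i k => buy (i + 1) (k + (X 0).toNat)) (Fin.tail X) + 1

open Classical in
lemma symmetricRule_cons (T : ℕ) (buy : ℕ → ℕ → Prop) (b : Bool) (Y : Fin T → Bool) :
    symmetricRule (T + 1) buy (Fin.cons b Y) =
      if b = true ∧ buy 0 0 then 1
      else symmetricRule T (fun i k => buy (i + 1) (k + b.toNat)) Y + 1 := by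
  simp only [symmetricRule, Fin.cons_zero, Fin.tail_cons]

lemma symmetricRule_bounds (T : ℕ) (buy : ℕ → ℕ → Prop) (X : Fin T → Bool) :
    1 ≤ symmetricRule T buy X ∧ symmetricRule T buy X ≤ T + 1 := by
  induction T generalizing buy with
  | zero => simp [symmetricRule]
  | succ T ih =>
    cases X using Fin.consCases with
    | _ b Y =>
      have := ih (fun i k => buy (i + 1) (k + b.toNat)) Y
      rw [symmetricRule_cons]
      split_ifs <;> omega

lemma symmetricRule_adapted (T : ℕ) (buy : ℕ → ℕ → Prop) : Adapted T (symmetricRule T buy) := by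
  refine ⟨symmetricRule_bounds T buy, fun X Y hXY => ?_⟩
  induction T generalizing buy with
  | zero => rfl
  | succ T ih =>
    cases X using Fin.consCases with
    | _ b X =>
    cases Y using Fin.consCases with
    | _ c Y =>
      have hbc : b = c := by
        simpa using hXY 0 (by have := (symmetricRule_bounds _ buy (Fin.cons b X)).1; simp; omega)
      subst hbc
      simp only [symmetricRule_cons] at hXY ⊢
      split_ifs at hXY ⊢ with hbuy
      · rfl
      · congr 1
        exact ih _ X Y fun i hi => by simpa using hXY i.succ (by simp; omega)

theorem symmetricRule_eq_succ_iff {T : ℕ} {buy : ℕ → ℕ → Prop} {X : Fin T → Bool} {i : Fin T}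
    (hi : (i : ℕ) + 1 ≤ symmetricRule T buy X) :
    symmetricRule T buy X = i + 1 ↔ X i = true ∧ buy i (goodCount T X i) := by
  induction T generalizing buy with
  | zero => exact i.elim0
  | succ T ih =>
    cases X using Fin.consCases with
    | _ b Y =>
    rw [symmetricRule_cons] at hi ⊢
    cases i using Fin.cases with
    | zero =>
      simp only [Fin.val_zero, zero_add, Fin.cons_zero, goodCount_zero]
      split_ifs with hbuy
      · simpa using hbuy
      · have := (symmetricRule_bounds T (fun i k => buy (i + 1) (k + b.toNat)) Y).1
        exact iff_of_false (by omega) hbuy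
    | succ j =>
      split_ifs at hi ⊢ with hbuy
      · simp at hi
      · simp only [Fin.val_succ, add_left_inj, Fin.cons_succ, goodCount_cons_succ] at hi ⊢
        rw [ih (by omega), add_comm b.toNat]

end SymmetricRule

-- On day `i` (0-indexed) of `T`, there remain `T - 1 - i` days after today.
noncomputable abbrev optimalRule (m : ℕ → ℝ) (B : ℝ) (T k : ℕ) : (Fin T → Bool) → ℕ :=
  symmetricRule T fun i j => BuyNow m B (T - 1 - i) (k + j)

open Classical in
lemma optimalRule_cons (m : ℕ → ℝ) (B : ℝ) (T k : ℕ) (b : Bool) (Y : Fin T → Bool) :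
    optimalRule m B (T + 1) k (Fin.cons b Y) =
      if b = true ∧ BuyNow m B T k then 1 else optimalRule m B T (k + b.toNat) Y + 1 := by
  rw [optimalRule, symmetricRule_cons]
  congr 3
  funext i j
  congr 1 <;> omega

theorem objective_optimalRule (m : ℕ → ℝ) (B : ℝ) (T k : ℕ) :
    objective T m B k (optimalRule m B T k) = value m B T k := by
  induction T generalizing k with
  | zero => simp [value, objective, cost_of_adapted_zero (symmetricRule_adapted _ _)]
  | succ T ih =>
    have hpos (k : ℕ) (Y : Fin T → Bool) : 1 ≤ optimalRule m B T k Y :=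
      (symmetricRule_bounds _ _ Y).1
    have hfalse : ∑ Y : Fin T → Bool, m (k + false.toNat + good T Y) *
        cost (T + 1) B (optimalRule m B (T + 1) k) (Fin.cons false Y) = value m B T k := by
      rw [sum_cons_mul_cost_of_continue (fun Y => by simp [optimalRule_cons]) (hpos k)]
      simp [ih]
    have htrue : ∑ Y : Fin T → Bool, m (k + true.toNat + good T Y) *
        cost (T + 1) B (optimalRule m B (T + 1) k) (Fin.cons true Y) =
          min (B * mass m T (k + 1)) (mass m T (k + 1) + value m B T (k + 1)) := by
      by_cases hbuy : BuyNow m B T k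
      · rw [sum_cons_mul_cost_of_stop fun Y => by simp [optimalRule_cons, hbuy]]
        simp [min_eq_left hbuy]
      · rw [sum_cons_mul_cost_of_continue (t := optimalRule m B T (k + 1))
          (fun Y => by simp [optimalRule_cons, hbuy]) (hpos _)]
        simp [ih, min_eq_right (le_of_not_ge hbuy)]
    rw [objective_succ, Fintype.sum_bool, value, hfalse, htrue, add_comm]

lemma sum_mul_Ep_div_eq_objective (T : ℕ) (B : ℝ) (P : ℝ →₀ ℝ) (c : ℝ → ℝ)
    (s : (Fin T → Bool) → ℕ) :
    (P.sum fun p w => w * (Ep T p (cost T B s) / c p)) =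
      objective T (fun j => ∑ p ∈ P.support, P p / c p * (p ^ j * (1 - p) ^ (T - j))) B 0 s := by
  simp only [Finsupp.sum, objective, Ep, zero_add, Finset.sum_div, Finset.mul_sum, Finset.sum_mul]
  rw [Finset.sum_comm]
  exact Finset.sum_congr rfl fun X _ => Finset.sum_congr rfl fun p _ => by ring

end RentOrBuy

open RentOrBuy

theorem exists_info_symmetric_optimal_rule_general
    (T : ℕ) (B : ℝ) (hB : 1 < B)
    (P : ℝ →₀ ℝ) (hP0 : ∀ p, 0 ≤ P p)
    (hPsupp : ∀ p ∈ P.support, p ∈ Set.Ioc (0 : ℝ) 1) :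
    ∃ s : (Fin T → Bool) → ℕ, Adapted T s ∧
      -- s minimizes the prior-independent objective over all adapted stopping rules:
      (∀ s' : (Fin T → Bool) → ℕ, Adapted T s' →
        (P.sum fun p w => w * (Ep T p (cost T B s) / OPTstar T B p))
          ≤ P.sum fun p w => w * (Ep T p (cost T B s') / OPTstar T B p)) ∧
      -- s never stops on a bad-weather day:
      (∀ X, s X ≤ T → ∀ i : Fin T, (i : ℕ) + 1 = s X → X i = true) ∧
      -- s is information-symmetric:
      (∀ i : Fin T, ∀ X Y : Fin T → Bool,
        (i : ℕ) + 1 ≤ s X → (i : ℕ) + 1 ≤ s Y →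
        goodCount T X (i : ℕ) = goodCount T Y (i : ℕ) → X i = Y i →
        (s X = (i : ℕ) + 1 ↔ s Y = (i : ℕ) + 1)) := by
  set m : ℕ → ℝ := fun j => ∑ p ∈ P.support, P p / OPTstar T B p * (p ^ j * (1 - p) ^ (T - j))
  have hm (j : ℕ) : 0 ≤ m j := Finset.sum_nonneg fun p hp => by
    obtain ⟨hp0, hp1⟩ := hPsupp p hp
    exact mul_nonneg (div_nonneg (hP0 p) (OPTstar_nonneg T (by linarith) hp0.le hp1))
      (mul_nonneg (pow_nonneg hp0.le _) (pow_nonneg (sub_nonneg.2 hp1) _))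
  refine ⟨optimalRule m B T 0, symmetricRule_adapted _ _, fun s' hs' => ?_,
    fun X _ i hi => ((symmetricRule_eq_succ_iff hi.le).1 hi.symm).1,
    fun i X Y hX hY hcount hXi => ?_⟩
  · rw [sum_mul_Ep_div_eq_objective, sum_mul_Ep_div_eq_objective, objective_optimalRule]
    exact value_le_objective (by linarith) hm 0 hs'
  · rw [symmetricRule_eq_succ_iff hX, symmetricRule_eq_succ_iff hY, hcount, hXi]

/-- For any finitely supported prior `P` on `(0,1]`, there is an adapted
stopping rule minimizing the prior-independent objective
`Φ(s) = Σ_p P(p)·E_p[cost(s)]/OPT*(p)` over all adapted stopping rules which never stops on a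
bad-weather day and is information-symmetric: its stop/continue decision on day `i` depends
only on the number of good days among the first `i−1` days and the weather on day `i`. -/
theorem exists_info_symmetric_optimal_rule
    (T : ℕ) (hT : 1 ≤ T) (B : ℝ) (hB : 1 < B)
    (P : ℝ →₀ ℝ) (hP0 : ∀ p, 0 ≤ P p) (hP1 : (P.sum fun _ w => w) = 1)
    (hPsupp : ∀ p ∈ P.support, p ∈ Set.Ioc (0 : ℝ) 1) :
    ∃ s : (Fin T → Bool) → ℕ, Adapted T s ∧
      -- s minimizes the prior-independent objective over all adapted stopping rules:
      (∀ s' : (Fin T → Bool) → ℕ, Adapted T s' →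
        (P.sum fun p w => w * (Ep T p (cost T B s) / OPTstar T B p))
          ≤ P.sum fun p w => w * (Ep T p (cost T B s') / OPTstar T B p)) ∧
      -- s never stops on a bad-weather day:
      (∀ X, s X ≤ T → ∀ i : Fin T, (i : ℕ) + 1 = s X → X i = true) ∧
      -- s is information-symmetric:
      (∀ i : Fin T, ∀ X Y : Fin T → Bool,
        (i : ℕ) + 1 ≤ s X → (i : ℕ) + 1 ≤ s Y →
        goodCount T X (i : ℕ) = goodCount T Y (i : ℕ) → X i = Y i →
        (s X = (i : ℕ) + 1 ↔ s Y = (i : ℕ) + 1)) :=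
  exists_info_symmetric_optimal_rule_general T B hB P hP0 hPsupp
end
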